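/- arXiv:1703.08652 — 7 statements merged into one kernel-verified Lean document; each statement's English description precedes it below -/
import Mathlib

section
/- Let n be a positive integer and p an odd prime. A connected circulant graph Cay(Z_n, S) of degree p − 1 (i.e., |S| = p − 1) admits a perfect code if and only if p divides n and s ≢ s′ (mod p) for all distinct s, s′ ∈ S ∪ {0}. -/
open Polynomial

/-- The circulant graph `Cay(Z_n, S)`: vertices are `ZMod n`, and `u, v` are adjacent
iff `v - u ∈ S` (here symmetrised; when `S = -S` this agrees with the usual definition). -/
def circulantGraph (n : ℕ) (S : Finset (ZMod n)) : SimpleGraph (ZMod n) :=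
  SimpleGraph.fromRel (fun u v => v - u ∈ S)

/-- `C` is a perfect code in `G`: an independent set such that every vertex outside `C`
is adjacent to exactly one vertex of `C`. -/
def IsPerfectCode {V : Type*} (G : SimpleGraph V) (C : Set V) : Prop :=
  (∀ u ∈ C, ∀ v ∈ C, ¬ G.Adj u v) ∧ ∀ v, v ∉ C → ∃! c, c ∈ C ∧ G.Adj v c

/-- `C` is a total perfect code in `G`: every vertex is adjacent to exactly one vertex of `C`. -/
def IsTotalPerfectCode {V : Type*} (G : SimpleGraph V) (C : Set V) : Prop :=
  ∀ v, ∃! c, c ∈ C ∧ G.Adj v c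

/-!
A perfect code `C` of `Cay(Z_n, S)` is the same thing as a complement of `D = S ∪ {0}`:
`C ⊕ D = Z_n`, so `|C| p = n`. For each `p ^ j ∣ n`, `j ≥ 1`, a primitive `p ^ j`-th root
of unity `ζ` kills `(∑_C ζ^c) (∑_D ζ^d)`, so `Φ_{p^j}` divides the residue polynomial of `C`
or of `D`. If it divided that of `C` for all `j ≤ v_p(n)`, then `p ^ v_p(n)` would divide `|C|`,
which is impossible. So for some `j` it divides the residue polynomial of `D` mod `p ^ j`, whose
coefficients are nonnegative with sum `p`; that polynomial is then `Φ_{p^j}` itself, i.e. `D`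
meets each residue `t p^(j-1)` (`t < p`) mod `p ^ j` exactly once. For `j ≥ 2` this puts `D`
inside `p Z_n`, against connectivity; for `j = 1` it says the elements of `D` are distinct mod `p`.
Conversely, if they are, `D` is a transversal of the kernel of `Z_n → Z_p`, and that kernel is a
perfect code.
-/

open Finset

lemma SimpleGraph.isPerfectCode_iff_existsUnique {V : Type*} (G : SimpleGraph V) (C : Set V) :
    IsPerfectCode G C ↔ ∀ v, ∃! c : C, (c : V) = v ∨ G.Adj v c := by
  constructor
  · rintro ⟨hind, hcov⟩ v
    by_cases hv : v ∈ C
    · refine ⟨⟨v, hv⟩, Or.inl rfl, fun c hc => Subtype.ext ?_⟩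
      exact hc.resolve_right fun hadj => hind v hv c c.2 hadj
    · obtain ⟨c, ⟨hcC, hadj⟩, huniq⟩ := hcov v hv
      refine ⟨⟨c, hcC⟩, Or.inr hadj, fun c' hc' => Subtype.ext (huniq c' ⟨c'.2, ?_⟩)⟩
      exact hc'.resolve_left fun h => hv (h ▸ c'.2)
  · intro h
    refine ⟨fun u hu v hv hadj => hadj.ne ?_, fun v hv => ?_⟩
    · exact congrArg Subtype.val
        ((h v).unique (y₁ := ⟨u, hu⟩) (y₂ := ⟨v, hv⟩) (Or.inr hadj.symm) (Or.inl rfl))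
    · obtain ⟨c, hc, huniq⟩ := h v
      have hadj : G.Adj v c := hc.resolve_left fun h => hv (h ▸ c.2)
      exact ⟨c, ⟨c.2, hadj⟩,
        fun c' hc' => congrArg Subtype.val (huniq ⟨c', hc'.1⟩ (Or.inr hc'.2))⟩

section CirculantGraph

variable {n : ℕ} {S : Finset (ZMod n)}

lemma circulantGraph_adj (hS : ∀ s ∈ S, -s ∈ S) {u v : ZMod n} :
    (circulantGraph n S).Adj u v ↔ u ≠ v ∧ u - v ∈ S := by
  have : u - v ∈ S ↔ v - u ∈ S :=
    ⟨fun h => neg_sub u v ▸ hS _ h, fun h => neg_sub v u ▸ hS _ h⟩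
  simp [circulantGraph, this]

lemma isPerfectCode_circulantGraph_iff (hS : ∀ s ∈ S, -s ∈ S) {C : Set (ZMod n)} :
    IsPerfectCode (circulantGraph n S) C ↔
      AddSubgroup.IsComplement C ((insert 0 S : Finset (ZMod n)) : Set (ZMod n)) := by
  rw [SimpleGraph.isPerfectCode_iff_existsUnique,
    AddSubgroup.isComplement_iff_existsUnique_neg_add_mem]
  refine forall_congr' fun v => existsUnique_congr fun c => ?_
  rw [circulantGraph_adj hS, coe_insert, Set.mem_insert_iff, mem_coe, neg_add_eq_sub, sub_eq_zero]
  by_cases hc : v = c <;> simp [hc, eq_comm]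

lemma closure_eq_top_of_connected (h : (circulantGraph n S).Connected) :
    AddSubgroup.closure (S : Set (ZMod n)) = ⊤ := by
  have hwalk {u v : ZMod n} (w : (circulantGraph n S).Walk u v) :
      v - u ∈ AddSubgroup.closure (S : Set (ZMod n)) := by
    induction w with
    | nil => simp
    | @cons a b c hadj _ ih =>
      have hab : b - a ∈ AddSubgroup.closure (S : Set (ZMod n)) := by
        rcases (SimpleGraph.fromRel_adj _ _ _).mp hadj with ⟨-, hs | hs⟩
        · exact AddSubgroup.subset_closure hs
        · simpa using AddSubgroup.neg_mem _ (AddSubgroup.subset_closure hs)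
      simpa using AddSubgroup.add_mem _ hab ih
  refine eq_top_iff.mpr fun v _ => ?_
  simpa using hwalk (h.preconnected 0 v).some

lemma castHom_eq_castHom_iff {p : ℕ} [NeZero n] (hpn : p ∣ n) {a b : ZMod n} :
    ZMod.castHom hpn (ZMod p) a = ZMod.castHom hpn (ZMod p) b ↔ a.val ≡ b.val [MOD p] := by
  rw [ZMod.castHom_apply, ZMod.castHom_apply, ZMod.cast_eq_val, ZMod.cast_eq_val,
    ZMod.natCast_eq_natCast_iff]

lemma closure_ne_top_of_forall_dvd_val [NeZero n] {p : ℕ} (hp : p.Prime) (hpn : p ∣ n)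
    (hS : ∀ s ∈ S, p ∣ s.val) : AddSubgroup.closure (S : Set (ZMod n)) ≠ ⊤ := by
  have := Fact.mk hp
  intro htop
  have hle : AddSubgroup.closure (S : Set (ZMod n)) ≤
      (ZMod.castHom hpn (ZMod p)).toAddMonoidHom.ker :=
    AddSubgroup.closure_le _ |>.mpr fun s hs => by
      rw [SetLike.mem_coe, AddMonoidHom.mem_ker, RingHom.toAddMonoidHom_eq_coe,
        AddMonoidHom.coe_coe, ZMod.castHom_apply, ZMod.cast_eq_val, ZMod.natCast_eq_zero_iff]
      exact hS s hs
  have h1 := hle (htop ▸ AddSubgroup.mem_top (1 : ZMod n))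
  rw [AddMonoidHom.mem_ker, RingHom.toAddMonoidHom_eq_coe, AddMonoidHom.coe_coe, map_one] at h1
  exact one_ne_zero h1

end CirculantGraph

lemma AddSubgroup.isComplement_ker_of_injOn {G H : Type*} [AddGroup G] [AddGroup H] [Fintype H]
    (φ : G →+ H) {D : Finset G} (hinj : Set.InjOn φ D) (hD : #D = Fintype.card H) :
    AddSubgroup.IsComplement (φ.ker : Set G) D := by
  classical
  refine AddSubgroup.isComplement_iff_existsUnique_add_neg_mem.mpr fun g => ?_
  have himage : D.image φ = univ := eq_univ_of_card _ (by rw [card_image_of_injOn hinj, hD])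
  obtain ⟨d, hd, hdg⟩ := mem_image.mp (himage ▸ mem_univ (φ g))
  refine ⟨⟨d, hd⟩, by simp [hdg], fun d' hd' => Subtype.ext (hinj d'.2 hd ?_)⟩
  exact (add_neg_eq_zero.mp (by simpa using hd')).symm.trans hdg.symm

lemma AddChar.sum_mul_sum_eq_zero_of_isComplement {G R : Type*} [AddCommGroup G] [Fintype G]
    [CommRing R] [IsDomain R] {ψ : AddChar G R} (hψ : ψ ≠ 1) {A B : Finset G}
    (h : AddSubgroup.IsComplement (A : Set G) B) : (∑ a ∈ A, ψ a) * ∑ b ∈ B, ψ b = 0 := by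
  calc (∑ a ∈ A, ψ a) * ∑ b ∈ B, ψ b
      = ∑ x : ↥(A : Set G) × ↥(B : Set G), ψ (x.1.1 + x.2.1) := by
        simp only [AddChar.map_add_eq_mul, Fintype.sum_prod_type, ← Finset.mul_sum,
          ← Finset.sum_mul, Finset.coe_sort_coe, Finset.sum_coe_sort]
    _ = ∑ g, ψ g := h.sum_comp (fun g => ψ g)
    _ = 0 := AddChar.sum_eq_zero_of_ne_one hψ

namespace Polynomial

lemma eq_one_of_coeff_nonneg_of_eval_one {q : ℤ[X]} (hq : ∀ i, 0 ≤ q.coeff i)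
    (h0 : 1 ≤ q.coeff 0) (h1 : q.eval 1 = 1) : q = 1 := by
  have hsum : ∑ i ∈ q.support, q.coeff i = 1 := by
    rw [← h1, eval_eq_sum, sum_def]; simp
  have h0mem : 0 ∈ q.support := mem_support_iff.mpr (by omega)
  ext i
  rcases eq_or_ne i 0 with rfl | hi
  · have := hsum ▸ single_le_sum (fun j _ => hq j) h0mem
    simp only [coeff_one_zero]; omega
  · rw [coeff_one, if_neg hi]
    by_contra hne
    have hpair := hsum ▸ sum_le_sum_of_subset_of_nonneg
      (insert_subset h0mem (singleton_subset_iff.mpr (mem_support_iff.mpr hne)))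
      (fun j _ _ => hq j)
    rw [sum_pair (Ne.symm hi)] at hpair
    have := hq i
    omega

lemma coeff_cyclotomic_prime_pow {p : ℕ} (hp : p.Prime) (s i : ℕ) :
    (cyclotomic (p ^ (s + 1)) ℤ).coeff i = if p ^ s ∣ i ∧ i / p ^ s < p then 1 else 0 := by
  have : cyclotomic (p ^ (s + 1)) ℤ = expand ℤ (p ^ s) (∑ t ∈ range p, X ^ t) := by
    simp [cyclotomic_prime_pow_eq_geom_sum hp, map_sum]
  rw [this, coeff_expand (pow_pos hp.pos s), finsetSum_coeff]
  simp only [coeff_X_pow, sum_ite_eq, mem_range]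
  split_ifs <;> simp_all

lemma coeff_cyclotomic_prime_pow_mul_of_lt {p : ℕ} (hp : p.Prime) (q : ℤ[X]) {s i : ℕ}
    (hi : i < p ^ s) : (cyclotomic (p ^ (s + 1)) ℤ * q).coeff i = q.coeff i := by
  have hX : X ^ p ^ s ∣ cyclotomic (p ^ (s + 1)) ℤ - 1 := by
    refine X_pow_dvd_iff.mpr fun d hd => ?_
    rw [coeff_sub, coeff_cyclotomic_prime_pow hp, coeff_one]
    rcases eq_or_ne d 0 with rfl | hd0
    · simp [hp.pos]
    · simp only [hd0, if_false, sub_zero, ite_eq_right_iff]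
      exact fun h => absurd (Nat.eq_zero_of_dvd_of_lt h.1 hd) hd0
  have := X_pow_dvd_iff.mp (dvd_mul_of_dvd_left hX q) i hi
  rwa [sub_mul, one_mul, coeff_sub, sub_eq_zero] at this

lemma eq_cyclotomic_prime_pow_of_dvd {p : ℕ} (hp : p.Prime) {s : ℕ} {f : ℤ[X]}
    (hf : ∀ i, 0 ≤ f.coeff i) (h0 : 1 ≤ f.coeff 0) (h1 : f.eval 1 = p)
    (hdeg : f.natDegree < p ^ (s + 1)) (hdvd : cyclotomic (p ^ (s + 1)) ℤ ∣ f) :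
    f = cyclotomic (p ^ (s + 1)) ℤ := by
  obtain ⟨q, rfl⟩ := hdvd
  suffices q = 1 by rw [this, mul_one]
  have hq0 : q ≠ 0 := by rintro rfl; simp [eq_comm, hp.ne_zero] at h1
  have hqdeg : q.natDegree < p ^ s := by
    rw [natDegree_mul (cyclotomic_ne_zero _ ℤ) hq0, natDegree_cyclotomic,
      Nat.totient_prime_pow_succ hp] at hdeg
    have : p ^ s * (p - 1) + p ^ s = p ^ (s + 1) := by
      rw [← Nat.mul_succ, Nat.succ_eq_add_one, Nat.sub_add_cancel hp.one_le, pow_succ]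
    omega
  have hlow : ∀ {i}, i < p ^ s → (cyclotomic (p ^ (s + 1)) ℤ * q).coeff i = q.coeff i :=
    coeff_cyclotomic_prime_pow_mul_of_lt hp q
  refine eq_one_of_coeff_nonneg_of_eval_one (fun i => ?_) (hlow (pow_pos hp.pos s) ▸ h0) ?_
  · rcases lt_or_ge i (p ^ s) with hi | hi
    · exact hlow hi ▸ hf i
    · rw [coeff_eq_zero_of_natDegree_lt (hqdeg.trans_le hi)]
  · rw [eval_mul, eval_one_cyclotomic_prime_pow (hn := ⟨hp⟩)] at h1
    exact mul_left_cancel₀ (by exact_mod_cast hp.ne_zero) (h1.trans (mul_one _).symm)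

lemma dvd_eval_one_of_cyclotomic_dvd {m : ℕ} (hm : 0 < m) {f : ℤ[X]}
    (h : ∀ d ∈ m.divisors.erase 1, cyclotomic d ℤ ∣ f) : (m : ℤ) ∣ f.eval 1 := by
  have hQ : (∑ i ∈ range m, X ^ i : ℚ[X]) ∣ f.map (Int.castRingHom ℚ) := by
    rw [← prod_cyclotomic_eq_geom_sum hm]
    refine prod_dvd_of_coprime (fun d _ e _ hde => cyclotomic.isCoprime_rat hde) fun d hd => ?_
    simpa using Polynomial.map_dvd (Int.castRingHom ℚ) (h d hd)
  obtain ⟨q, rfl⟩ :=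
    (map_dvd_map (Int.castRingHom ℚ) Int.cast_injective (y := f) (monic_geom_sum_X hm.ne')).mp
      (by simpa [Polynomial.map_sum] using hQ)
  simp [eval_finsetSum]

lemma cyclotomic_dvd_of_aeval_eq_zero {K : Type*} [Field K] [CharZero K] {m : ℕ} {ζ : K}
    (hζ : IsPrimitiveRoot ζ m) (hm : 0 < m) {f : ℤ[X]} (hf : aeval ζ f = 0) :
    cyclotomic m ℤ ∣ f := by
  rw [cyclotomic_eq_minpoly hζ hm]
  exact minpoly.isIntegrallyClosed_dvd (hζ.isIntegral hm) hf

end Polynomial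

section ResiduePoly

variable {n : ℕ}

-- The mask polynomial of `A` reduced modulo `X ^ m - 1`.
noncomputable def residuePoly (A : Finset (ZMod n)) (m : ℕ) : ℤ[X] :=
  ∑ a ∈ A, X ^ (a.val % m)

lemma coeff_residuePoly (A : Finset (ZMod n)) (m i : ℕ) :
    (residuePoly A m).coeff i = #{a ∈ A | a.val % m = i} := by
  simp [residuePoly, finsetSum_coeff, coeff_X_pow, eq_comm]

lemma residuePoly_eval_one (A : Finset (ZMod n)) (m : ℕ) : (residuePoly A m).eval 1 = #A := by
  simp [residuePoly, eval_finsetSum]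

lemma natDegree_residuePoly_lt (A : Finset (ZMod n)) {m : ℕ} (hm : 0 < m) :
    (residuePoly A m).natDegree < m := by
  refine Nat.lt_of_le_pred hm (natDegree_sum_le_of_forall_le _ _ fun a _ => ?_)
  exact (natDegree_X_pow_le _).trans (Nat.le_pred_of_lt (Nat.mod_lt _ hm))

lemma aeval_residuePoly {K : Type*} [CommRing K] {ζ : K} {m : ℕ} (hζ : ζ ^ m = 1)
    (A : Finset (ZMod n)) : aeval ζ (residuePoly A m) = ∑ a ∈ A, ζ ^ a.val := by
  simp [residuePoly, ← pow_eq_pow_mod _ hζ]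

lemma cyclotomic_dvd_residuePoly_or_of_isComplement [NeZero n] {C D : Finset (ZMod n)}
    (h : AddSubgroup.IsComplement (C : Set (ZMod n)) D) {m a b : ℕ} (hmn : m ∣ n) (hm : m ≠ 1)
    (ha : m ∣ a) (hb : m ∣ b) :
    cyclotomic m ℤ ∣ residuePoly C a ∨ cyclotomic m ℤ ∣ residuePoly D b := by
  have hm0 : 0 < m := Nat.pos_of_dvd_of_pos hmn (NeZero.pos n)
  have hζ := Complex.isPrimitiveRoot_exp m hm0.ne'
  have hψ : AddChar.zmodChar n ((hζ.pow_eq_one_iff_dvd n).mpr hmn) ≠ 1 := by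
    rw [AddChar.zmod_char_ne_one_iff, ← Nat.cast_one (R := ZMod n), AddChar.zmodChar_apply',
      pow_one]
    exact hζ.ne_one (by omega)
  have := AddChar.sum_mul_sum_eq_zero_of_isComplement hψ h
  simp only [AddChar.zmodChar_apply] at this
  rw [← aeval_residuePoly ((hζ.pow_eq_one_iff_dvd a).mpr ha),
    ← aeval_residuePoly ((hζ.pow_eq_one_iff_dvd b).mpr hb)] at this
  exact (mul_eq_zero.mp this).imp (cyclotomic_dvd_of_aeval_eq_zero hζ hm0)
    (cyclotomic_dvd_of_aeval_eq_zero hζ hm0)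

lemma injOn_and_dvd_of_residuePoly_eq_cyclotomic {p : ℕ} (hp : p.Prime) {D : Finset (ZMod n)}
    {s : ℕ} (h : residuePoly D (p ^ (s + 1)) = cyclotomic (p ^ (s + 1)) ℤ) :
    Set.InjOn (fun d : ZMod n => d.val % p ^ (s + 1)) D ∧ ∀ d ∈ D, p ^ s ∣ d.val := by
  have hcount (i : ℕ) :
      #{d ∈ D | d.val % p ^ (s + 1) = i} = if p ^ s ∣ i ∧ i / p ^ s < p then 1 else 0 := by
    have := (coeff_residuePoly D _ i).symm.trans (h ▸ coeff_cyclotomic_prime_pow hp s i)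
    split_ifs at this ⊢ <;> exact_mod_cast this
  have hmem {d} (hd : d ∈ D) : d ∈ ({x ∈ D | x.val % p ^ (s + 1) = d.val % p ^ (s + 1)}) :=
    mem_filter.mpr ⟨hd, rfl⟩
  refine ⟨fun d hd d' hd' hdd' => ?_, fun d hd => ?_⟩
  · refine card_le_one.mp ?_ d (hmem hd) d' (mem_filter.mpr ⟨hd', hdd'.symm⟩)
    rw [hcount]; split_ifs <;> simp
  · have hpos := card_pos.mpr ⟨d, hmem hd⟩
    rw [hcount] at hpos
    split_ifs at hpos with hi
    · exact (Nat.dvd_mod_iff (pow_dvd_pow p s.le_succ)).mp hi.1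
    · exact absurd hpos (lt_irrefl 0)

theorem dvd_and_forall_dvd_or_injOn_of_isComplement [NeZero n] {p : ℕ} (hp : p.Prime)
    {C D : Finset (ZMod n)} (h : AddSubgroup.IsComplement (C : Set (ZMod n)) D)
    (hD0 : 0 ∈ D) (hD : #D = p) :
    p ∣ n ∧ ((∀ d ∈ D, p ∣ d.val) ∨ Set.InjOn (fun d : ZMod n => d.val % p) D) := by
  have := Fact.mk hp
  have hcard : #C * p = n := by simpa [hD] using h.card_mul_card
  have hpn : p ∣ n := hcard ▸ dvd_mul_left p _
  refine ⟨hpn, ?_⟩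
  set k := padicValNat p n
  obtain ⟨s, hsk, hdvd⟩ :
      ∃ s < k, cyclotomic (p ^ (s + 1)) ℤ ∣ residuePoly D (p ^ (s + 1)) := by
    by_contra! hD'
    have hC : ((p ^ k : ℕ) : ℤ) ∣ #C := by
      rw [← residuePoly_eval_one C (p ^ k)]
      refine dvd_eval_one_of_cyclotomic_dvd (pow_pos hp.pos k) fun d hd => ?_
      obtain ⟨hd1, hd⟩ := mem_erase.mp hd
      obtain ⟨j, hjk, rfl⟩ := (Nat.dvd_prime_pow hp).mp (Nat.dvd_of_mem_divisors hd)
      obtain ⟨s, rfl⟩ : ∃ s, j = s + 1 :=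
        Nat.exists_eq_succ_of_ne_zero (by rintro rfl; simp at hd1)
      have hjn : p ^ (s + 1) ∣ n := (pow_dvd_pow p hjk).trans pow_padicValNat_dvd
      exact (cyclotomic_dvd_residuePoly_or_of_isComplement h hjn hd1 (pow_dvd_pow p hjk)
        dvd_rfl).resolve_right (hD' s (by omega))
    have hCp : p ^ (k + 1) ∣ #C * p :=
      pow_succ p k ▸ mul_dvd_mul (Int.natCast_dvd_natCast.mp hC) dvd_rfl
    exact pow_succ_padicValNat_not_dvd (NeZero.ne n) (hcard ▸ hCp)
  have h0 : 1 ≤ (residuePoly D (p ^ (s + 1))).coeff 0 := by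
    rw [coeff_residuePoly]
    exact_mod_cast card_pos.mpr ⟨0, mem_filter.mpr ⟨hD0, by simp⟩⟩
  have heq := eq_cyclotomic_prime_pow_of_dvd hp (fun i => by rw [coeff_residuePoly]; positivity) h0
    (by rw [residuePoly_eval_one, hD]) (natDegree_residuePoly_lt D (pow_pos hp.pos _)) hdvd
  obtain ⟨hinj, hdvd⟩ := injOn_and_dvd_of_residuePoly_eq_cyclotomic hp heq
  rcases s with _ | s
  · exact Or.inr (by simpa using hinj)
  · exact Or.inl fun d hd => (dvd_pow_self p s.succ_ne_zero).trans (hdvd d hd)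

end ResiduePoly

theorem circulant_perfectCode_iff_of_degree_pred_prime_general
    (n : ℕ) (hn : 0 < n) (p : ℕ) (hp : p.Prime)
    (S : Finset (ZMod n)) (h0S : (0 : ZMod n) ∉ S) (hSneg : ∀ s ∈ S, -s ∈ S)
    (hcard : S.card = p - 1) (hconn : (circulantGraph n S).Connected) :
    (∃ C : Set (ZMod n), IsPerfectCode (circulantGraph n S) C) ↔
      (p ∣ n ∧ ∀ s ∈ insert (0 : ZMod n) S, ∀ s' ∈ insert (0 : ZMod n) S,
        s ≠ s' → ¬ (s.val ≡ s'.val [MOD p])) := by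
  classical
  have := NeZero.of_pos hn
  have := NeZero.of_pos hp.pos
  have hD : #(insert 0 S) = p := by
    rw [card_insert_of_notMem h0S, hcard, Nat.sub_add_cancel hp.one_le]
  constructor
  · rintro ⟨C, hC⟩
    have hcompl := (isPerfectCode_circulantGraph_iff hSneg).mp hC
    rw [← Set.coe_toFinset C] at hcompl
    obtain ⟨hpn, hdvd | hinj⟩ :=
      dvd_and_forall_dvd_or_injOn_of_isComplement hp hcompl (mem_insert_self 0 S) hD
    · exact absurd (closure_eq_top_of_connected hconn)
        (closure_ne_top_of_forall_dvd_val hp hpn fun s hs => hdvd s (mem_insert_of_mem hs))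
    · exact ⟨hpn, fun s hs s' hs' hne hmod => hne (hinj hs hs' hmod)⟩
  · rintro ⟨hpn, hdist⟩
    have hinj : Set.InjOn (ZMod.castHom hpn (ZMod p)) (insert 0 S : Finset (ZMod n)) :=
      fun s hs s' hs' h => by_contra fun hne =>
        hdist s hs s' hs' hne ((castHom_eq_castHom_iff hpn).mp h)
    exact ⟨_, (isPerfectCode_circulantGraph_iff hSneg).mpr
      (AddSubgroup.isComplement_ker_of_injOn (ZMod.castHom hpn (ZMod p)).toAddMonoidHom hinj
        (by rw [hD, ZMod.card]))⟩

/-- **Theorem 1.1.** Let `n` be a positive integer and `p` an odd prime. A connected circulant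
graph `Cay(Z_n, S)` of degree `p - 1` admits a perfect code iff `p ∣ n` and `s ≢ s' (mod p)`
for distinct `s, s' ∈ S ∪ {0}`. -/
theorem circulant_perfectCode_iff_of_degree_pred_prime
    (n : ℕ) (hn : 0 < n) (p : ℕ) (hp : p.Prime) (hodd : Odd p)
    (S : Finset (ZMod n)) (h0S : (0 : ZMod n) ∉ S) (hSneg : ∀ s ∈ S, -s ∈ S)
    (hcard : S.card = p - 1) (hconn : (circulantGraph n S).Connected) :
    (∃ C : Set (ZMod n), IsPerfectCode (circulantGraph n S) C) ↔
      (p ∣ n ∧ ∀ s ∈ insert (0 : ZMod n) S, ∀ s' ∈ insert (0 : ZMod n) S,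
        s ≠ s' → ¬ (s.val ≡ s'.val [MOD p])) :=
  circulant_perfectCode_iff_of_degree_pred_prime_general n hn p hp S h0S hSneg hcard hconn
end

section
/- Let n, l be positive integers and p a prime such that p^l divides n but p^{l+1} does not divide n. A connected circulant graph Cay(Z_n, S) of degree p^l (i.e., |S| = p^l) admits a total perfect code if and only if s ≢ s′ (mod p^l) for all distinct s, s′ ∈ S. -/
open Polynomial Finset

lemma tpc_pow_mod {d : ℕ} {ζ : ℂ} (hζ : ζ ^ d = 1) (a : ℕ) : ζ ^ a = ζ ^ (a % d) := by
  conv_lhs => rw [← Nat.div_add_mod a d]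
  rw [pow_add, pow_mul, hζ, one_pow, one_mul]

lemma tpc_pow_val_add {n d : ℕ} [NeZero n] (hd : d ∣ n) {ζ : ℂ} (hζ : ζ ^ d = 1)
    (u v : ZMod n) : ζ ^ (u + v).val = ζ ^ u.val * ζ ^ v.val := by
  obtain ⟨c, hc⟩ := hd
  have hn : ζ ^ n = 1 := by rw [hc, pow_mul, hζ, one_pow]
  rw [ZMod.val_add, ← tpc_pow_mod hn, pow_add]

lemma tpc_sum_univ_zmod {M : Type*} [AddCommMonoid M] {n : ℕ} [NeZero n] (g : ℕ → M) :
    ∑ v : ZMod n, g v.val = ∑ m ∈ Finset.range n, g m := by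
  refine Finset.sum_bij (fun v _ => v.val) (fun v _ => Finset.mem_range.mpr (ZMod.val_lt v))
    ?_ ?_ (fun v _ => rfl)
  · intro a _ b _ h
    exact ZMod.val_injective n h
  · intro m hm
    exact ⟨(m : ZMod n), Finset.mem_univ _, ZMod.val_cast_of_lt (Finset.mem_range.mp hm)⟩

lemma tpc_char_sum_counts {n d : ℕ} [NeZero n] (hd0 : 0 < d) {ζ : ℂ} (hζ : ζ ^ d = 1)
    (T : Finset (ZMod n)) :
    ∑ t ∈ T, ζ ^ t.val
      = ∑ r ∈ Finset.range d, (#{t ∈ T | t.val % d = r} : ℂ) * ζ ^ r := by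
  rw [← Finset.sum_fiberwise_of_maps_to (g := fun t : ZMod n => t.val % d)
      (fun t _ => Finset.mem_range.mpr (Nat.mod_lt _ hd0)) (fun t => ζ ^ t.val)]
  refine Finset.sum_congr rfl fun r hr => ?_
  have h1 : ∀ t ∈ {t ∈ T | t.val % d = r}, ζ ^ t.val = ζ ^ r := by
    intro t ht
    rw [tpc_pow_mod hζ, (Finset.mem_filter.mp ht).2]
  rw [Finset.sum_congr rfl h1, Finset.sum_const, nsmul_eq_mul]

lemma tpc_tiling_card {n : ℕ} [NeZero n] (A B : Finset (ZMod n))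
    (ht : ∀ v : ZMod n, ∃! x : ZMod n × ZMod n, (x.1 ∈ A ∧ x.2 ∈ B) ∧ x.1 + x.2 = v) :
    A.card * B.card = n := by
  have h : (A ×ˢ B).card = (Finset.univ : Finset (ZMod n)).card := by
    refine Finset.card_bij (fun x _ => x.1 + x.2) (fun x _ => Finset.mem_univ _) ?_ ?_
    · intro x hx y hy hxy
      rcases Finset.mem_product.mp hx with ⟨h1, h2⟩
      rcases Finset.mem_product.mp hy with ⟨h3, h4⟩
      exact ((ht (x.1 + x.2)).unique ⟨⟨h1, h2⟩, rfl⟩ ⟨⟨h3, h4⟩, hxy.symm⟩).symm ▸ rfl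
    · intro v _
      obtain ⟨x, ⟨hx, hsum⟩, _⟩ := ht v
      exact ⟨x, Finset.mem_product.mpr hx, hsum⟩
  rwa [Finset.card_product, Finset.card_univ, ZMod.card] at h

lemma tpc_tiling_sum {n : ℕ} [NeZero n] (A B : Finset (ZMod n))
    (ht : ∀ v : ZMod n, ∃! x : ZMod n × ZMod n, (x.1 ∈ A ∧ x.2 ∈ B) ∧ x.1 + x.2 = v)
    (f : ZMod n → ℂ) (hf : ∀ u v, f (u + v) = f u * f v) :
    (∑ a ∈ A, f a) * (∑ b ∈ B, f b) = ∑ v : ZMod n, f v := by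
  rw [Finset.sum_mul_sum, ← Finset.sum_product']
  refine Finset.sum_bij (fun x _ => x.1 + x.2) (fun x _ => Finset.mem_univ _) ?_ ?_ ?_
  · intro x hx y hy hxy
    rcases Finset.mem_product.mp hx with ⟨h1, h2⟩
    rcases Finset.mem_product.mp hy with ⟨h3, h4⟩
    exact (ht (x.1 + x.2)).unique ⟨⟨h1, h2⟩, rfl⟩ ⟨⟨h3, h4⟩, hxy.symm⟩
  · intro v _
    obtain ⟨x, ⟨hx, hsum⟩, _⟩ := ht v
    exact ⟨x, Finset.mem_product.mpr hx, hsum⟩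
  · intro x _
    exact (hf x.1 x.2).symm

lemma tpc_count_split {n Q d pp : ℕ} [NeZero n] (hQ : 0 < Q) (hpp : 0 < pp)
    (hd : d = Q * pp) (T : Finset (ZMod n)) {u : ℕ} (hu : u < Q) :
    #{t ∈ T | t.val % Q = u} = ∑ k ∈ Finset.range pp, #{t ∈ T | t.val % d = u + k * Q} := by
  have hd0 : 0 < d := by rw [hd]; positivity
  have hQd : Q ∣ d := ⟨pp, hd⟩
  rw [Finset.card_eq_sum_card_fiberwise (f := fun t : ZMod n => t.val % d / Q)
    (t := Finset.range pp) (fun t _ => Finset.mem_range.mpr (by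
      rw [Nat.div_lt_iff_lt_mul hQ]
      calc t.val % d < d := Nat.mod_lt _ hd0
        _ = pp * Q := by rw [hd, mul_comm]))]
  refine Finset.sum_congr rfl fun k hk => congrArg Finset.card ?_
  rw [Finset.filter_filter]
  refine Finset.filter_congr fun t _ => ?_
  have ham : t.val % d % Q = t.val % Q := Nat.mod_mod_of_dvd _ hQd
  have hdm := Nat.div_add_mod (t.val % d) Q
  constructor
  · rintro ⟨h1, h2⟩
    rw [← hdm, h2, ham, h1]
    ring
  · intro h
    have h1 : t.val % d % Q = u := by
      rw [h, Nat.add_mul_mod_self_right, Nat.mod_eq_of_lt hu]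
    have h2 : t.val % d / Q = k := by
      rw [h, Nat.add_mul_div_right _ _ hQ, Nat.div_eq_of_lt hu, Nat.zero_add]
    exact ⟨by rw [← ham, h1], h2⟩
lemma tpc_sum_range_mul {M : Type*} [AddCommMonoid M] (g : ℕ → M) (a b : ℕ) :
    ∑ m ∈ Finset.range (a * b), g m
      = ∑ k ∈ Finset.range a, ∑ u ∈ Finset.range b, g (k * b + u) := by
  induction a with
  | zero => simp
  | succ a ih =>
      have h : (a + 1) * b = a * b + b := by ring
      rw [h, Finset.sum_range_add, ih, Finset.sum_range_succ]

lemma tpc_coeff_sum_monomial {R : Type*} [Semiring R] (N : ℕ) (f : ℕ → R) (m : ℕ) :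
    (∑ i ∈ Finset.range N, Polynomial.monomial i (f i)).coeff m
      = if m < N then f m else 0 := by
  rw [Polynomial.finset_sum_coeff]
  simp only [Polynomial.coeff_monomial]
  rw [Finset.sum_ite_eq' (Finset.range N) m f]
  simp [Finset.mem_range]

/-- Key lemma: if a rational combination of `p^j`-th roots of unity vanishes, the
coefficients are constant along cosets of `p^(j-1)`. -/
lemma tpc_keyA {p j : ℕ} (hp : p.Prime) (hj : 0 < j) {ζ : ℂ}
    (hζ : IsPrimitiveRoot ζ (p ^ j)) (b : ℕ → ℚ)
    (hb : ∑ r ∈ Finset.range (p ^ j), (b r : ℂ) * ζ ^ r = 0) :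
    ∀ u < p ^ (j - 1), ∀ k < p, b (u + k * p ^ (j - 1)) = b u := by
  set Q := p ^ (j - 1) with hQ
  set N := (p - 1) * Q with hN
  have hp2 := hp.two_le
  have hQpos : 0 < Q := pow_pos hp.pos _
  have hpj : p ^ j = Q * p := by
    rw [hQ, ← pow_succ]
    congr 1
    omega
  have hNQ : p ^ j = N + Q := by
    rw [hpj, hN]
    have : (p - 1) * Q + Q = ((p-1)+1) * Q := by ring
    rw [this]
    have h2 : p - 1 + 1 = p := by omega
    rw [h2, mul_comm]
  have hζQ : IsPrimitiveRoot (ζ ^ Q) p := hζ.pow (pow_pos hp.pos _) hpj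
  have hgeom : ∑ k ∈ Finset.range p, (ζ ^ Q) ^ k = 0 :=
    hζQ.geom_sum_eq_zero hp.one_lt
  -- split hb
  have hsplit : (∑ m ∈ Finset.range N, (b m : ℂ) * ζ ^ m)
      + ∑ u ∈ Finset.range Q, (b (N + u) : ℂ) * ζ ^ (N + u) = 0 := by
    rw [← Finset.sum_range_add (fun m => (b m : ℂ) * ζ ^ m) N Q, ← hNQ]
    exact hb
  -- the difference polynomial
  set P : ℚ[X] := ∑ m ∈ Finset.range N, Polynomial.monomial m (b m - b (m % Q + N)) with hP
  have hcoeff : ∀ m, P.coeff m = if m < N then b m - b (m % Q + N) else 0 := by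
    intro m; rw [hP]; exact tpc_coeff_sum_monomial N _ m
  have hsum_geom : ∑ k ∈ Finset.range (p - 1), (ζ ^ Q) ^ k = -((ζ ^ Q) ^ (p - 1)) := by
    have : ∑ k ∈ Finset.range ((p-1)+1), (ζ ^ Q) ^ k = 0 := by
      have h1 : (p - 1) + 1 = p := by omega
      rw [h1]; exact hgeom
    rw [Finset.sum_range_succ] at this
    linear_combination this
  have hT : ∑ m ∈ Finset.range N, (b (m % Q + N) : ℂ) * ζ ^ m
      = -∑ u ∈ Finset.range Q, (b (N + u) : ℂ) * ζ ^ (N + u) := by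
    rw [hN, tpc_sum_range_mul (fun m => (b (m % Q + N) : ℂ) * ζ ^ m) (p - 1) Q]
    have hrw : ∀ k ∈ Finset.range (p - 1),
        ∑ u ∈ Finset.range Q, (b ((k * Q + u) % Q + N) : ℂ) * ζ ^ (k * Q + u)
          = (ζ ^ Q) ^ k * ∑ u ∈ Finset.range Q, (b (N + u) : ℂ) * ζ ^ u := by
      intro k _
      rw [Finset.mul_sum]
      refine Finset.sum_congr rfl fun u hu => ?_
      rw [Finset.mem_range] at hu
      have hmm : (k * Q + u) % Q = u := by
        rw [Nat.add_comm, Nat.add_mul_mod_self_right, Nat.mod_eq_of_lt hu]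
      rw [hmm, pow_add, pow_mul, Nat.add_comm N u]
      ring
    rw [Finset.sum_congr rfl hrw, ← Finset.sum_mul, hsum_geom, neg_mul, Finset.mul_sum]
    refine congrArg Neg.neg (Finset.sum_congr rfl fun u hu => ?_)
    rw [pow_add, hN, mul_comm (p - 1) Q, pow_mul]
    ring
  have haev : Polynomial.aeval ζ P = 0 := by
    rw [hP, map_sum]
    simp only [Polynomial.aeval_monomial]
    have hrw : ∑ m ∈ Finset.range N, (algebraMap ℚ ℂ) (b m - b (m % Q + N)) * ζ ^ m
        = (∑ m ∈ Finset.range N, (b m : ℂ) * ζ ^ m)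
          - ∑ m ∈ Finset.range N, (b (m % Q + N) : ℂ) * ζ ^ m := by
      rw [← Finset.sum_sub_distrib]
      refine Finset.sum_congr rfl fun m _ => ?_
      rw [eq_ratCast (algebraMap ℚ ℂ) (b m - b (m % Q + N)), Rat.cast_sub]
      ring
    rw [hrw, hT]
    linear_combination hsplit
  have hNpos : 0 < N := Nat.mul_pos (by omega) hQpos
  have hP0 : P = 0 := by
    by_contra hne
    have hdv : minpoly ℚ ζ ∣ P := minpoly.dvd ℚ ζ haev
    have hmp : Polynomial.cyclotomic (p ^ j) ℚ = minpoly ℚ ζ :=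
      Polynomial.cyclotomic_eq_minpoly_rat hζ (pow_pos hp.pos _)
    have hdeg1 : (Polynomial.cyclotomic (p ^ j) ℚ).natDegree = N := by
      rw [Polynomial.natDegree_cyclotomic, Nat.totient_prime_pow hp hj, mul_comm]
    have hle : N ≤ P.natDegree := by
      rw [← hdeg1, hmp]
      exact Polynomial.natDegree_le_of_dvd hdv hne
    have hlt : P.natDegree < N := by
      rw [Polynomial.natDegree_lt_iff_degree_lt hne,
        Polynomial.degree_lt_iff_coeff_zero]
      intro m hm
      rw [hcoeff, if_neg (by omega)]
    omega
  intro u hu k hk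
  have hconst : ∀ k' < p, b (u + k' * Q) = b (u + N) := by
    intro k' hk'
    by_cases h : k' = p - 1
    · rw [h, hN]
    · have hk'' : k' < p - 1 := by omega
      have hm : u + k' * Q < N := by
        calc u + k' * Q < Q + k' * Q := by omega
          _ = (k' + 1) * Q := by ring
          _ ≤ (p - 1) * Q := Nat.mul_le_mul_right _ (by omega)
      have hc := hcoeff (u + k' * Q)
      rw [hP0] at hc
      simp only [Polynomial.coeff_zero] at hc
      rw [if_pos hm] at hc
      have hmodu : (u + k' * Q) % Q = u := by
        rw [Nat.add_mul_mod_self_right, Nat.mod_eq_of_lt hu]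
      rw [hmodu] at hc
      linarith [hc]
  have h1 := hconst k hk
  have h2 := hconst 0 hp.pos
  simp only [Nat.zero_mul, Nat.add_zero] at h2
  rw [h1, h2]
lemma tpc_count_structure {n p j : ℕ} [NeZero n] (hp : p.Prime) (hj : 0 < j)
    {ζ : ℂ} (hζ : IsPrimitiveRoot ζ (p ^ j)) (T : Finset (ZMod n))
    (h0 : ∑ t ∈ T, ζ ^ t.val = 0) :
    ∀ u < p ^ (j - 1), ∀ k < p,
      #{t ∈ T | t.val % p ^ j = u + k * p ^ (j - 1)} = #{t ∈ T | t.val % p ^ j = u} := by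
  have hd0 : 0 < p ^ j := pow_pos hp.pos _
  have h1 := tpc_char_sum_counts hd0 hζ.pow_eq_one T
  rw [h0] at h1
  have hb : ∑ r ∈ Finset.range (p ^ j),
      (((#{t ∈ T | t.val % p ^ j = r} : ℚ)) : ℂ) * ζ ^ r = 0 := by
    calc ∑ r ∈ Finset.range (p ^ j),
          (((#{t ∈ T | t.val % p ^ j = r} : ℚ)) : ℂ) * ζ ^ r
        = ∑ r ∈ Finset.range (p ^ j),
          ((#{t ∈ T | t.val % p ^ j = r} : ℕ) : ℂ) * ζ ^ r :=
          Finset.sum_congr rfl fun r _ => by norm_cast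
      _ = 0 := h1.symm
  intro u hu k hk
  have hk2 := tpc_keyA hp hj hζ _ hb u hu k hk
  exact_mod_cast hk2

lemma tpc_adj {n : ℕ} (S : Finset (ZMod n)) (h0S : (0 : ZMod n) ∉ S)
    (hSneg : ∀ s ∈ S, -s ∈ S) (u v : ZMod n) :
    (circulantGraph n S).Adj u v ↔ v - u ∈ S := by
  simp only [circulantGraph, SimpleGraph.fromRel_adj]
  constructor
  · rintro ⟨hne, h | h⟩
    · exact h
    · have h2 := hSneg _ h
      rwa [neg_sub] at h2
  · intro h
    refine ⟨?_, Or.inl h⟩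
    rintro rfl
    rw [sub_self] at h
    exact h0S h

set_option maxHeartbeats 1600000 in
/-- **Theorem 1.4.** Let `n, l` be positive integers and `p` a prime with `p^l ∣ n` but
`p^(l+1) ∤ n`. A connected circulant graph `Cay(Z_n, S)` of degree `p^l` admits a total perfect
code iff `s ≢ s' (mod p^l)` for distinct `s, s' ∈ S`. -/
theorem circulant_totalPerfectCode_iff_of_degree_primePow
    (n l : ℕ) (hn : 0 < n) (hl : 0 < l) (p : ℕ) (hp : p.Prime)
    (hdvd : p ^ l ∣ n) (hndvd : ¬ p ^ (l + 1) ∣ n)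
    (S : Finset (ZMod n)) (h0S : (0 : ZMod n) ∉ S) (hSneg : ∀ s ∈ S, -s ∈ S)
    (hcard : S.card = p ^ l) (hconn : (circulantGraph n S).Connected) :
    (∃ C : Set (ZMod n), IsTotalPerfectCode (circulantGraph n S) C) ↔
      (∀ s ∈ S, ∀ s' ∈ S, s ≠ s' → ¬ (s.val ≡ s'.val [MOD p ^ l])) := by
  haveI : NeZero n := ⟨hn.ne'⟩
  have hq0 : 0 < p ^ l := pow_pos hp.pos _
  constructor
  · rintro ⟨C, hC⟩
    classical
    set C' : Finset (ZMod n) := (Set.toFinite C).toFinset with hC'def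
    have hmemC' : ∀ x, x ∈ C' ↔ x ∈ C := fun x => Set.Finite.mem_toFinset _
    -- the tiling property
    have htile : ∀ v : ZMod n,
        ∃! x : ZMod n × ZMod n, (x.1 ∈ C' ∧ x.2 ∈ S) ∧ x.1 + x.2 = v := by
      intro v
      obtain ⟨c, ⟨hcC, hadj⟩, huniq⟩ := hC v
      have hs : c - v ∈ S := (tpc_adj S h0S hSneg v c).mp hadj
      have hvc : v - c ∈ S := by
        have h2 := hSneg _ hs
        rwa [neg_sub] at h2
      refine ⟨(c, v - c), ⟨⟨(hmemC' c).mpr hcC, hvc⟩, by ring⟩, ?_⟩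
      rintro ⟨c', s'⟩ ⟨⟨hc', hs'⟩, hsum⟩
      simp only at hsum
      have hcv : c' - v ∈ S := by
        have h3 : c' - v = -s' := by rw [← hsum]; ring
        rw [h3]
        exact hSneg _ hs'
      have hc'c : c' = c :=
        huniq c' ⟨(hmemC' c').mp hc', (tpc_adj S h0S hSneg v c').mpr hcv⟩
      have hs'e : s' = v - c := by rw [← hc'c, ← hsum]; ring
      simp [hc'c, hs'e]
    have hcardC : C'.card * p ^ l = n := by
      have h := tpc_tiling_card C' S htile
      rwa [hcard] at h
    have hpC : ¬ p ∣ C'.card := by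
      rintro ⟨m, hm⟩
      exact hndvd ⟨m, by rw [← hcardC, hm, pow_succ]; ring⟩
    -- the key counting fact, by induction on j
    have key : ∀ j, j ≤ l → ∀ r < p ^ j,
        #{s ∈ S | s.val % p ^ j = r} = p ^ (l - j) := by
      intro j
      induction j with
      | zero =>
          intro _ r hr
          have hr0 : r = 0 := by simpa using hr
          subst hr0
          simp only [pow_zero, Nat.mod_one, Nat.sub_zero]
          simpa using hcard
      | succ j ih =>
          intro hjl r hr
          have hdn : p ^ (j + 1) ∣ n := dvd_trans (pow_dvd_pow p hjl) hdvd
          have hd1 : 1 < p ^ (j + 1) := Nat.one_lt_pow (Nat.succ_ne_zero j) hp.one_lt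
          have hd0 : (0:ℕ) < p ^ (j + 1) := by omega
          obtain ⟨ζ, hζ⟩ : ∃ ζ : ℂ, IsPrimitiveRoot ζ (p ^ (j + 1)) :=
            ⟨_, Complex.isPrimitiveRoot_exp _ hd0.ne'⟩
          have hζd : ζ ^ (p ^ (j + 1)) = 1 := hζ.pow_eq_one
          have hζn : ζ ^ n = 1 := by
            obtain ⟨c, hc⟩ := hdn
            rw [hc, pow_mul, hζd, one_pow]
          have hzero : ∑ v : ZMod n, ζ ^ v.val = 0 := by
            rw [tpc_sum_univ_zmod (fun m => ζ ^ m), geom_sum_eq (hζ.ne_one hd1) n,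
              hζn, sub_self, zero_div]
          have hfac := tpc_tiling_sum C' S htile (fun v => ζ ^ v.val)
            (tpc_pow_val_add hdn hζd)
          rw [hzero] at hfac
          rcases mul_eq_zero.mp hfac with h0 | h0
          · -- the code side cannot vanish
            exfalso
            apply hpC
            have hcs := tpc_count_structure hp (Nat.succ_pos j) hζ C' h0
            simp only [Nat.add_sub_cancel, Nat.succ_sub_one] at hcs
            have hCc : C'.card = ∑ r ∈ Finset.range (p * p ^ j),
                #{t ∈ C' | t.val % p ^ (j + 1) = r} := by
              rw [← pow_succ']
              exact Finset.card_eq_sum_card_fiberwise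
                (fun t _ => Finset.mem_range.mpr (Nat.mod_lt _ hd0))
            rw [tpc_sum_range_mul (fun r => #{t ∈ C' | t.val % p ^ (j + 1) = r})
              p (p ^ j)] at hCc
            have hre : ∀ k ∈ Finset.range p, ∀ u ∈ Finset.range (p ^ j),
                #{t ∈ C' | t.val % p ^ (j + 1) = k * p ^ j + u}
                  = #{t ∈ C' | t.val % p ^ (j + 1) = u} := by
              intro k hk u hu
              rw [Nat.add_comm (k * p ^ j) u]
              exact hcs u (Finset.mem_range.mp hu) k (Finset.mem_range.mp hk)
            rw [Finset.sum_congr rfl (fun k hk => Finset.sum_congr rfl (hre k hk))] at hCc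
            rw [Finset.sum_const, Finset.card_range, smul_eq_mul] at hCc
            exact ⟨_, hCc⟩
          · -- the connection-set side vanishes
            have hcs := tpc_count_structure hp (Nat.succ_pos j) hζ S h0
            simp only [Nat.add_sub_cancel, Nat.succ_sub_one] at hcs
            have hstep : ∀ u < p ^ j,
                #{t ∈ S | t.val % p ^ (j + 1) = u} = p ^ (l - (j + 1)) := by
              intro u hu
              have hsp := tpc_count_split (n := n) (pow_pos hp.pos j) hp.pos
                (pow_succ p j) S hu
              rw [ih (le_of_lt hjl) u hu] at hsp
              have hre : ∀ k ∈ Finset.range p,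
                  #{t ∈ S | t.val % p ^ (j + 1) = u + k * p ^ j}
                    = #{t ∈ S | t.val % p ^ (j + 1) = u} := by
                intro k hk
                exact hcs u hu k (Finset.mem_range.mp hk)
              rw [Finset.sum_congr rfl hre, Finset.sum_const, Finset.card_range,
                smul_eq_mul] at hsp
              have hlj : l - j = (l - (j + 1)) + 1 := by omega
              rw [hlj, pow_succ'] at hsp
              exact Nat.eq_of_mul_eq_mul_left hp.pos hsp.symm
            -- decompose r
            have hrlt : r / p ^ j < p := by
              rw [Nat.div_lt_iff_lt_mul (pow_pos hp.pos j)]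
              calc r < p ^ (j + 1) := hr
                _ = p * p ^ j := by rw [pow_succ]; ring
            have hrm : r % p ^ j < p ^ j := Nat.mod_lt _ (pow_pos hp.pos j)
            have hrd : r = r % p ^ j + (r / p ^ j) * p ^ j := by
              conv_lhs => rw [← Nat.div_add_mod r (p ^ j)]
              ring
            rw [hrd, hcs _ hrm _ hrlt]
            exact hstep _ hrm
    -- conclude
    intro s hs s' hs' hne hmod
    have h1 := key l le_rfl (s.val % p ^ l) (Nat.mod_lt _ hq0)
    have hsub : ({s, s'} : Finset (ZMod n)) ⊆ {t ∈ S | t.val % p ^ l = s.val % p ^ l} := by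
      intro t ht
      rcases Finset.mem_insert.mp ht with rfl | ht
      · exact Finset.mem_filter.mpr ⟨hs, rfl⟩
      · rw [Finset.mem_singleton] at ht
        subst ht
        exact Finset.mem_filter.mpr ⟨hs', (Nat.ModEq.symm hmod : _ = _)⟩
    have h2 : 2 ≤ #{t ∈ S | t.val % p ^ l = s.val % p ^ l} := by
      calc 2 = ({s, s'} : Finset (ZMod n)).card := (Finset.card_pair hne).symm
        _ ≤ _ := Finset.card_le_card hsub
    rw [h1, Nat.sub_self, pow_zero] at h2
    omega
  · intro hdist
    classical
    haveI : NeZero (p ^ l) := ⟨hq0.ne'⟩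
    set π : ZMod n →+* ZMod (p ^ l) := ZMod.castHom hdvd (ZMod (p ^ l)) with hπdef
    have hπval : ∀ x : ZMod n, (π x).val = x.val % p ^ l := by
      intro x
      rw [hπdef, ZMod.castHom_apply, ← ZMod.natCast_val, ZMod.val_natCast]
    have hinj : ∀ s ∈ S, ∀ s' ∈ S, π s = π s' → s = s' := by
      intro s hs s' hs' h
      by_contra hne
      refine hdist s hs s' hs' hne ?_
      have h2 := congrArg ZMod.val h
      rw [hπval, hπval] at h2
      exact h2
    have himg : Finset.image (fun s => π s) S = Finset.univ := by
      apply Finset.eq_univ_of_card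
      rw [Finset.card_image_of_injOn (fun a ha b hb => hinj a ha b hb), hcard, ZMod.card]
    refine ⟨{x : ZMod n | π x = 0}, fun v => ?_⟩
    have hmem : -π v ∈ Finset.image (fun s => π s) S := by
      rw [himg]; exact Finset.mem_univ _
    obtain ⟨s, hsS, hπs⟩ := Finset.mem_image.mp hmem
    refine ⟨v + s, ⟨?_, ?_⟩, ?_⟩
    · show π (v + s) = 0
      rw [map_add, hπs, add_neg_cancel]
    · rw [tpc_adj S h0S hSneg]
      simpa using hsS
    · rintro c ⟨hc0, hadj⟩
      have hs' : c - v ∈ S := (tpc_adj S h0S hSneg v c).mp hadj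
      have hπeq : π (c - v) = π s := by
        rw [map_sub, (hc0 : π c = 0), hπs]
        ring
      have hcv : c - v = s := hinj _ hs' _ hsS hπeq
      rw [← hcv]
      ring
end

section
/- Let n be a positive integer and let S be a subset of Z_n with 0 ∉ S and S = −S. A subset C of Z_n is a perfect code in the circulant graph Cay(Z_n, S) if and only if there exists a polynomial q(x) ∈ Z[x] such that f_C(x) · f_{S∪{0}}(x) = (x^n − 1) q(x) + (x^{n−1} + x^{n−2} + ··· + x + 1). -/
open Polynomial

/-!
`C` is a perfect code exactly when every vertex has a unique code vertex in its closed
neighbourhood; in `Cay(Z_n, S)` this says that each `v` has exactly one representation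
`v = c + s` with `c ∈ C`, `s ∈ S ∪ {0}`. Modulo `x^n - 1` a monomial `x^a` of
`f_C · f_{S∪{0}}` reduces to `x^(a mod n)`, so the product is congruent to `∑_v N(v) x^v̄`,
where `N(v)` counts these representations. That polynomial and `1 + x + ⋯ + x^(n-1)` both have
degree `< n`, so they are congruent modulo `x^n - 1` only if they are equal, i.e. only if `N ≡ 1`.
-/

open Finset

namespace SimpleGraph

variable {V : Type*} (G : SimpleGraph V)

theorem isPerfectCode_iff_existsUnique_eq_or_adj (C : Set V) :
    IsPerfectCode G C ↔ ∀ v, ∃! c, c ∈ C ∧ (c = v ∨ G.Adj v c) := by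
  constructor
  · rintro ⟨hind, hdom⟩ v
    by_cases hv : v ∈ C
    · refine ⟨v, ⟨hv, Or.inl rfl⟩, ?_⟩
      rintro c ⟨hc, rfl | hadj⟩
      · rfl
      · exact absurd hadj.symm (hind c hc v hv)
    · obtain ⟨c, ⟨hc, hadj⟩, huniq⟩ := hdom v hv
      refine ⟨c, ⟨hc, Or.inr hadj⟩, ?_⟩
      rintro c' ⟨hc', rfl | hadj'⟩
      · exact absurd hc' hv
      · exact huniq c' ⟨hc', hadj'⟩
  · intro h
    refine ⟨fun u hu v hv huv => huv.ne ((h v).unique ⟨hu, Or.inr huv.symm⟩ ⟨hv, Or.inl rfl⟩),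
      fun v hv => ?_⟩
    obtain ⟨c, ⟨hc, hcv⟩, huniq⟩ := h v
    have hadj : G.Adj v c := hcv.resolve_left (by rintro rfl; exact hv hc)
    exact ⟨c, ⟨hc, hadj⟩, fun c' hc' => huniq c' ⟨hc'.1, Or.inr hc'.2⟩⟩

end SimpleGraph

theorem Finset.card_filter_add_eq_card_filter_sub_mem {G : Type*} [AddCommGroup G] [DecidableEq G]
    (A B : Finset G) (v : G) :
    #{p ∈ A ×ˢ B | p.1 + p.2 = v} = #{a ∈ A | v - a ∈ B} := by
  refine card_nbij' Prod.fst (fun a => (a, v - a)) ?_ ?_ ?_ ?_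
  · rintro ⟨a, b⟩ h
    simp only [coe_filter, mem_product, Set.mem_ofPred_eq] at h ⊢
    exact ⟨h.1.1, by rw [← h.2, add_sub_cancel_left]; exact h.1.2⟩
  · intro a h
    simp only [coe_filter, mem_product, Set.mem_ofPred_eq] at h ⊢
    exact ⟨h, add_sub_cancel _ _⟩
  · rintro ⟨a, b⟩ h
    simp only [coe_filter, mem_product, Set.mem_ofPred_eq] at h
    simp [← h.2]
  · intro a _
    rfl

section Circulant

variable {n : ℕ} {S : Finset (ZMod n)}

theorem circulantGraph_adj_iff (hSneg : ∀ s ∈ S, -s ∈ S) {u v : ZMod n} :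
    (circulantGraph n S).Adj u v ↔ u ≠ v ∧ u - v ∈ S := by
  simp only [circulantGraph, SimpleGraph.fromRel_adj]
  refine and_congr_right fun _ => ⟨?_, Or.inr⟩
  rintro (h | h)
  · simpa using hSneg _ h
  · exact h

theorem eq_or_circulantGraph_adj_iff (h0S : (0 : ZMod n) ∉ S) (hSneg : ∀ s ∈ S, -s ∈ S)
    {u v : ZMod n} : u = v ∨ (circulantGraph n S).Adj v u ↔ v - u ∈ insert 0 S := by
  rw [circulantGraph_adj_iff hSneg, mem_insert, sub_eq_zero, eq_comm (a := v)]
  refine or_congr_right (and_iff_right_of_imp fun h huv => h0S ?_)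
  rwa [huv, sub_self] at h

theorem isPerfectCode_circulantGraph_iff_s4 (h0S : (0 : ZMod n) ∉ S) (hSneg : ∀ s ∈ S, -s ∈ S)
    (C : Finset (ZMod n)) :
    IsPerfectCode (circulantGraph n S) ↑C ↔ ∀ v, #{p ∈ C ×ˢ insert 0 S | p.1 + p.2 = v} = 1 := by
  simp only [SimpleGraph.isPerfectCode_iff_existsUnique_eq_or_adj,
    eq_or_circulantGraph_adj_iff h0S hSneg, card_filter_add_eq_card_filter_sub_mem,
    card_eq_one_iff_existsUnique, mem_filter, mem_coe]

end Circulant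

section Polynomial

variable {R : Type*} [CommRing R]

theorem X_pow_sub_one_dvd_X_pow_sub_X_pow_mod (n a : ℕ) :
    (X ^ n - 1 : R[X]) ∣ X ^ a - X ^ (a % n) := by
  have h : (X ^ a - X ^ (a % n) : R[X]) = ((X ^ n) ^ (a / n) - 1) * X ^ (a % n) := by
    rw [sub_mul, one_mul, ← pow_mul, ← pow_add, Nat.div_add_mod]
  have hpow : (X ^ n - 1 : R[X]) ∣ (X ^ n) ^ (a / n) - 1 := by
    simpa using sub_dvd_pow_sub_pow (X ^ n : R[X]) 1 (a / n)
  exact h ▸ hpow.mul_right _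

theorem dvd_sub_iff_eq_of_degree_lt [IsDomain R] {p a b : R[X]} (ha : a.degree < p.degree)
    (hb : b.degree < p.degree) : p ∣ a - b ↔ a = b :=
  ⟨fun h => sub_eq_zero.1 <| eq_zero_of_dvd_of_degree_lt h <|
    (degree_sub_le a b).trans_lt (max_lt ha hb), fun h => h ▸ by simp⟩

variable {n : ℕ} [NeZero n]

theorem sum_monomial_val_injective :
    Function.Injective fun c : ZMod n → R => ∑ v, monomial v.val (c v) := by
  intro c d h
  funext w
  simpa [finsetSum_coeff, coeff_monomial, (ZMod.val_injective n).eq_iff] using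
    congr_arg (coeff · w.val) h

theorem degree_sum_monomial_val_lt (c : ZMod n → R) :
    (∑ v, monomial v.val (c v)).degree < n := by
  refine (degree_sum_le _ _).trans_lt ((Finset.sup_lt_iff (WithBot.bot_lt_coe n)).2 fun v _ => ?_)
  exact (degree_monomial_le _ _).trans_lt (WithBot.coe_lt_coe.2 (ZMod.val_lt v))

theorem sum_range_X_pow_eq_sum_monomial_val :
    ∑ i ∈ range n, (X ^ i : R[X]) = ∑ v : ZMod n, monomial v.val 1 := by
  refine (sum_nbij' ZMod.val (fun i : ℕ => (i : ZMod n)) ?_ ?_ ?_ ?_ ?_).symm <;>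
    simp +contextual [ZMod.val_lt, X_pow_eq_monomial, Nat.mod_eq_of_lt]

theorem X_pow_sub_one_dvd_mul_sub_sum_card (A B : Finset (ZMod n)) :
    (X ^ n - 1 : R[X]) ∣ (∑ a ∈ A, X ^ a.val) * (∑ b ∈ B, X ^ b.val) -
      ∑ v, monomial v.val (#{p ∈ A ×ˢ B | p.1 + p.2 = v} : R) := by
  have hfib : ∑ v, monomial v.val (#{p ∈ A ×ˢ B | p.1 + p.2 = v} : R) =
      ∑ p ∈ A ×ˢ B, X ^ (p.1 + p.2).val := by
    rw [← sum_fiberwise' (A ×ˢ B) (fun p => p.1 + p.2) (fun v => (X : R[X]) ^ v.val)]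
    simp [← C_mul_X_pow_eq_monomial]
  rw [hfib, sum_mul_sum, ← sum_product', ← sum_sub_distrib]
  refine dvd_sum fun p _ => ?_
  rw [← pow_add, ZMod.val_add]
  exact X_pow_sub_one_dvd_X_pow_sub_X_pow_mod n _

end Polynomial

/-- **Lemma 2.2.** `C ⊆ Z_n` is a perfect code in `Cay(Z_n, S)` iff there is `q(x) ∈ ℤ[x]` with
`f_C(x) · f_{S∪{0}}(x) = (x^n - 1) q(x) + (x^{n-1} + ⋯ + x + 1)`. -/
theorem circulant_perfectCode_iff_poly
    (n : ℕ) (hn : 0 < n) (S : Finset (ZMod n))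
    (h0S : (0 : ZMod n) ∉ S) (hSneg : ∀ s ∈ S, -s ∈ S) (C : Finset (ZMod n)) :
    IsPerfectCode (circulantGraph n S) ↑C ↔
      ∃ q : ℤ[X],
        (∑ c ∈ C, (X : ℤ[X]) ^ c.val) * (∑ s ∈ insert (0 : ZMod n) S, (X : ℤ[X]) ^ s.val) =
          (X ^ n - 1) * q + ∑ i ∈ Finset.range n, (X : ℤ[X]) ^ i := by
  have : NeZero n := ⟨hn.ne'⟩
  set P := (∑ c ∈ C, (X : ℤ[X]) ^ c.val) * (∑ s ∈ insert (0 : ZMod n) S, (X : ℤ[X]) ^ s.val)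
  set N : ZMod n → ℤ := fun v => #{p ∈ C ×ˢ insert 0 S | p.1 + p.2 = v}
  have hdeg : (X ^ n - 1 : ℤ[X]).degree = n := by simpa using degree_X_pow_sub_C hn (1 : ℤ)
  rw [isPerfectCode_circulantGraph_iff_s4 h0S hSneg, sum_range_X_pow_eq_sum_monomial_val]
  calc (∀ v, #{p ∈ C ×ˢ insert 0 S | p.1 + p.2 = v} = 1) ↔ N = fun _ => 1 := by
        simp [funext_iff, N]
    _ ↔ ∑ v, monomial v.val (N v) = ∑ v : ZMod n, monomial v.val 1 :=
        sum_monomial_val_injective.eq_iff.symm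
    _ ↔ (X ^ n - 1) ∣ ∑ v, monomial v.val (N v) - ∑ v : ZMod n, monomial v.val 1 :=
        (dvd_sub_iff_eq_of_degree_lt (hdeg ▸ degree_sum_monomial_val_lt _)
          (hdeg ▸ degree_sum_monomial_val_lt _)).symm
    _ ↔ (X ^ n - 1) ∣ P - ∑ v : ZMod n, monomial v.val 1 := by
        rw [← sub_add_sub_cancel P (∑ v, monomial v.val (N v)),
          dvd_add_right (X_pow_sub_one_dvd_mul_sub_sum_card C _)]
    _ ↔ _ := exists_congr fun _ => sub_eq_iff_eq_add
end

section
/- Let Cay(Z_n, S) be a connected circulant graph of order n ≥ 4 and degree k = |S|. If k + 1 divides n and s ≢ s′ (mod k + 1) for all distinct s, s′ ∈ S ∪ {0}, then Cay(Z_n, S) admits a perfect code; indeed the set C = {0, k+1, 2(k+1), …, (n/(k+1) − 1)(k+1)} ⊆ Z_n is a perfect code in Cay(Z_n, S). -/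
open Polynomial

/-- **Lemma 2.3.** If `Cay(Z_n, S)` is a connected circulant graph of order `n ≥ 4` and degree
`k = |S|`, `k + 1 ∣ n`, and the elements of `S ∪ {0}` are pairwise distinct modulo `k + 1`,
then `C = {0, k+1, 2(k+1), …, (n/(k+1) - 1)(k+1)}` is a perfect code in `Cay(Z_n, S)`. -/
theorem circulant_perfectCode_of_pairwise_distinct_mod
    (n : ℕ) (hn : 4 ≤ n) (S : Finset (ZMod n))
    (h0S : (0 : ZMod n) ∉ S) (hSneg : ∀ s ∈ S, -s ∈ S)
    (hconn : (circulantGraph n S).Connected)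
    (k : ℕ) (hk : S.card = k) (hdvd : k + 1 ∣ n)
    (hdist : ∀ s ∈ insert (0 : ZMod n) S, ∀ s' ∈ insert (0 : ZMod n) S,
      s ≠ s' → ¬ (s.val ≡ s'.val [MOD k + 1])) :
    IsPerfectCode (circulantGraph n S)
      {c : ZMod n | ∃ i < n / (k + 1), c = (((k + 1) * i : ℕ) : ZMod n)} := by
  haveI : NeZero n := ⟨by omega⟩
  set φ : ZMod n →+* ZMod (k + 1) := ZMod.castHom hdvd (ZMod (k + 1)) with hφ
  have hval : ∀ a : ZMod n, ((a.val : ℕ) : ZMod (k + 1)) = φ a := by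
    intro a
    rw [ZMod.natCast_val, hφ, ZMod.castHom_apply]
  have hinj : ∀ s ∈ insert (0 : ZMod n) S, ∀ s' ∈ insert (0 : ZMod n) S,
      φ s = φ s' → s = s' := by
    intro s hs s' hs' h
    by_contra hne
    exact hdist s hs s' hs' hne (by rw [← ZMod.natCast_eq_natCast_iff, hval, hval, h])
  have hsurj : ∀ t : ZMod (k + 1), ∃ s ∈ insert (0 : ZMod n) S, φ s = t := by
    intro t
    have hcard : (Finset.image φ (insert (0 : ZMod n) S)).card = k + 1 := by
      rw [Finset.card_image_of_injOn (fun a ha b hb => hinj a ha b hb),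
        Finset.card_insert_of_notMem h0S, hk]
    have huniv : Finset.image φ (insert (0 : ZMod n) S) = Finset.univ := by
      apply Finset.eq_univ_of_card
      rw [hcard, ZMod.card]
    have ht : t ∈ Finset.image φ (insert (0 : ZMod n) S) := huniv ▸ Finset.mem_univ t
    obtain ⟨s, hs, hst⟩ := Finset.mem_image.1 ht
    exact ⟨s, hs, hst⟩
  obtain ⟨q, hq⟩ := hdvd
  have hndiv : n / (k + 1) = q := by rw [hq]; exact Nat.mul_div_cancel_left q (by omega)
  have hmemC : ∀ c : ZMod n,
      (c ∈ {c : ZMod n | ∃ i < n / (k + 1), c = (((k + 1) * i : ℕ) : ZMod n)}) ↔ φ c = 0 := by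
    intro c
    constructor
    · rintro ⟨i, hi, rfl⟩
      rw [map_natCast]
      push_cast
      simp
    · intro h
      have hd : (k + 1) ∣ c.val := by
        rwa [← hval, ZMod.natCast_eq_zero_iff] at h
      obtain ⟨i, hi⟩ := hd
      refine ⟨i, ?_, ?_⟩
      · have hlt := c.val_lt
        rw [hndiv]
        nlinarith [hi ▸ hlt, hq]
      · rw [← hi, ZMod.natCast_val, ZMod.cast_id]
  have hadj : ∀ u v : ZMod n, (circulantGraph n S).Adj u v ↔ u ≠ v ∧ v - u ∈ S := by
    intro u v
    constructor
    · rintro ⟨hne, h | h⟩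
      · exact ⟨hne, h⟩
      · exact ⟨hne, by simpa using hSneg _ h⟩
    · rintro ⟨hne, h⟩
      exact ⟨hne, Or.inl h⟩
  constructor
  · intro u hu v hv hadjuv
    rw [hadj] at hadjuv
    obtain ⟨hne, hs⟩ := hadjuv
    have h1 : φ (v - u) = φ 0 := by
      rw [map_sub, (hmemC u).1 hu, (hmemC v).1 hv, map_zero, sub_zero]
    have := hinj _ (Finset.mem_insert_of_mem hs) _ (Finset.mem_insert_self _ _) h1
    exact hne (by linear_combination -this)
  · intro v hv
    have hφv : φ v ≠ 0 := fun h => hv ((hmemC v).2 h)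
    obtain ⟨s, hsmem, hφs⟩ := hsurj (φ v)
    have hs : s ∈ S := by
      rcases Finset.mem_insert.1 hsmem with rfl | h
      · exact absurd (hφs.symm.trans (map_zero φ)) hφv
      · exact h
    have hs0 : s ≠ 0 := fun h => h0S (h ▸ hs)
    refine ⟨v - s, ⟨(hmemC _).2 (by rw [map_sub, hφs, sub_self]), ?_⟩, ?_⟩
    · rw [hadj]
      constructor
      · intro h
        exact hs0 (by linear_combination h)
      · have : (v - s) - v = -s := by ring
        rw [this]
        exact hSneg s hs
    · rintro c ⟨hcC, hadjvc⟩
      rw [hadj] at hadjvc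
      obtain ⟨hne, hcs⟩ := hadjvc
      have h2 : v - c ∈ S := by simpa using hSneg _ hcs
      have hφc : φ c = 0 := (hmemC c).1 hcC
      have h3 : φ (v - c) = φ s := by rw [map_sub, hφc, sub_zero, hφs]
      have := hinj _ (Finset.mem_insert_of_mem h2) _ (Finset.mem_insert_of_mem hs) h3
      linear_combination -this
end

section
/- Let n be a positive integer and let S be a subset of Z_n with 0 ∉ S and S = −S. A subset C of Z_n is a total perfect code in the circulant graph Cay(Z_n, S) if and only if there exists a polynomial q(x) ∈ Z[x] such that f_C(x) · f_S(x) = (x^n − 1) q(x) + (x^{n−1} + x^{n−2} + ··· + x + 1). -/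
open Polynomial

private lemma card_eq_one_iff_eu {α : Type*} (s : Finset α) :
    s.card = 1 ↔ ∃! a, a ∈ s := by
  rw [Finset.card_eq_one]
  constructor
  · rintro ⟨a, rfl⟩
    exact ⟨a, by simp, by simp⟩
  · rintro ⟨a, ha, hu⟩
    exact ⟨a, Finset.eq_singleton_iff_unique_mem.2 ⟨ha, hu⟩⟩

private lemma sum_zmod_val {n : ℕ} [NeZero n] {M : Type*} [AddCommMonoid M] (f : ℕ → M) :
    ∑ v : ZMod n, f v.val = ∑ i ∈ Finset.range n, f i := by
  refine Finset.sum_nbij' (i := fun v => v.val) (j := fun i => (i : ZMod n)) ?_ ?_ ?_ ?_ ?_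
  · intro v _; exact Finset.mem_range.2 (ZMod.val_lt v)
  · intro i _; exact Finset.mem_univ _
  · intro v _; exact ZMod.natCast_rightInverse v
  · intro i hi; exact ZMod.val_cast_of_lt (Finset.mem_range.1 hi)
  · intro v _; rfl

/-- **Lemma 2.4.** `C ⊆ Z_n` is a total perfect code in `Cay(Z_n, S)` iff there is
`q(x) ∈ ℤ[x]` with `f_C(x) · f_S(x) = (x^n - 1) q(x) + (x^{n-1} + ⋯ + x + 1)`. -/
theorem circulant_totalPerfectCode_iff_poly
    (n : ℕ) (hn : 0 < n) (S : Finset (ZMod n))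
    (h0S : (0 : ZMod n) ∉ S) (hSneg : ∀ s ∈ S, -s ∈ S) (C : Finset (ZMod n)) :
    IsTotalPerfectCode (circulantGraph n S) ↑C ↔
      ∃ q : ℤ[X],
        (∑ c ∈ C, (X : ℤ[X]) ^ c.val) * (∑ s ∈ S, (X : ℤ[X]) ^ s.val) =
          (X ^ n - 1) * q + ∑ i ∈ Finset.range n, (X : ℤ[X]) ^ i := by
  classical
  haveI : NeZero n := ⟨hn.ne'⟩
  have hadj : ∀ v c : ZMod n, (circulantGraph n S).Adj v c ↔ v - c ∈ S := by
    intro v c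
    constructor
    · rintro ⟨hne, h | h⟩
      · have := hSneg _ h; rwa [neg_sub] at this
      · exact h
    · intro h
      refine ⟨fun hvc => ?_, Or.inr h⟩
      rw [hvc, sub_self] at h; exact h0S h
  set N : ZMod n → ℕ := fun v => ((C ×ˢ S).filter fun p => p.1 + p.2 = v).card with hN
  -- TPC ↔ ∀ v, N v = 1
  have hTPC : IsTotalPerfectCode (circulantGraph n S) ↑C ↔ ∀ v, N v = 1 := by
    unfold IsTotalPerfectCode
    refine forall_congr' fun v => ?_
    rw [show N v = _ from rfl, card_eq_one_iff_eu]
    constructor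
    · rintro ⟨c, ⟨hc, hadjc⟩, hu⟩
      rw [hadj] at hadjc
      refine ⟨(c, v - c), ?_, ?_⟩
      · simp only [Finset.mem_filter, Finset.mem_product]
        exact ⟨⟨Finset.mem_coe.1 hc, hadjc⟩, by ring⟩
      · rintro ⟨c', s'⟩ hp
        simp only [Finset.mem_filter, Finset.mem_product] at hp
        obtain ⟨⟨hc', hs'⟩, heq⟩ := hp
        have hs'eq : s' = v - c' := by rw [← heq]; ring
        have hcc : c' = c := hu c' ⟨hc', (hadj v c').2 (hs'eq ▸ hs')⟩
        simp [hcc, hs'eq]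
    · rintro ⟨⟨c, s⟩, hp, hu⟩
      simp only [Finset.mem_filter, Finset.mem_product] at hp
      obtain ⟨⟨hc, hs⟩, heq⟩ := hp
      have hseq : s = v - c := by rw [← heq]; ring
      refine ⟨c, ⟨hc, (hadj v c).2 (hseq ▸ hs)⟩, ?_⟩
      intro c' ⟨hc', hadj'⟩
      rw [hadj] at hadj'
      have := hu (c', v - c') (by
        simp only [Finset.mem_filter, Finset.mem_product]
        exact ⟨⟨Finset.mem_coe.1 hc', hadj'⟩, by ring⟩)
      exact congrArg Prod.fst this
  -- polynomial decomposition
  set T : ℤ[X] := ∑ v : ZMod n, (Polynomial.C (N v : ℤ)) * X ^ v.val with hT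
  set R : ℤ[X] := ∑ i ∈ Finset.range n, (X : ℤ[X]) ^ i with hR
  have hsplit : ∃ Q : ℤ[X],
      (∑ c ∈ C, (X : ℤ[X]) ^ c.val) * (∑ s ∈ S, (X : ℤ[X]) ^ s.val)
        = (X ^ n - 1) * Q + T := by
    refine ⟨∑ p ∈ C ×ˢ S, if n ≤ p.1.val + p.2.val then X ^ ((p.1 + p.2).val) else 0, ?_⟩
    have key : ∀ p : ZMod n × ZMod n,
        (X : ℤ[X]) ^ (p.1.val + p.2.val)
          = (X ^ n - 1) * (if n ≤ p.1.val + p.2.val then X ^ ((p.1 + p.2).val) else 0)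
            + X ^ ((p.1 + p.2).val) := by
      intro p
      by_cases h : n ≤ p.1.val + p.2.val
      · have hv : p.1.val + p.2.val = (p.1 + p.2).val + n := ZMod.val_add_val_of_le h
        rw [if_pos h, hv, pow_add]
        ring
      · have hv : (p.1 + p.2).val = p.1.val + p.2.val :=
          ZMod.val_add_of_lt (not_le.1 h)
        rw [if_neg h, hv]
        ring
    calc (∑ c ∈ C, (X : ℤ[X]) ^ c.val) * (∑ s ∈ S, (X : ℤ[X]) ^ s.val)
        = ∑ p ∈ C ×ˢ S, (X : ℤ[X]) ^ (p.1.val + p.2.val) := by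
          rw [Finset.sum_mul_sum]
          rw [Finset.sum_product]
          simp [pow_add]
      _ = ∑ p ∈ C ×ˢ S, ((X ^ n - 1) * (if n ≤ p.1.val + p.2.val then X ^ ((p.1 + p.2).val) else 0)
            + X ^ ((p.1 + p.2).val)) := Finset.sum_congr rfl fun p _ => key p
      _ = (X ^ n - 1) * (∑ p ∈ C ×ˢ S, if n ≤ p.1.val + p.2.val then X ^ ((p.1 + p.2).val) else 0)
            + ∑ p ∈ C ×ˢ S, (X : ℤ[X]) ^ ((p.1 + p.2).val) := by
          rw [Finset.sum_add_distrib, Finset.mul_sum]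
      _ = (X ^ n - 1) * _ + T := by
          congr 1
          rw [hT]
          rw [← Finset.sum_fiberwise_of_maps_to (g := fun p : ZMod n × ZMod n => p.1 + p.2)
            (t := (Finset.univ : Finset (ZMod n))) (fun p _ => Finset.mem_univ _)]
          refine Finset.sum_congr rfl fun v _ => ?_
          rw [Finset.sum_congr rfl (fun p hp => by
            rw [(Finset.mem_filter.1 hp).2]), Finset.sum_const, hN]
          simp [nsmul_eq_mul]
  obtain ⟨Q, hQ⟩ := hsplit
  -- coefficient facts
  have hTcoeff : ∀ w : ZMod n, T.coeff w.val = (N w : ℤ) := by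
    intro w
    rw [hT, finset_sum_coeff]
    rw [Finset.sum_eq_single w]
    · simp [Polynomial.coeff_C_mul, coeff_X_pow]
    · intro v _ hvw
      simp only [Polynomial.coeff_C_mul, coeff_X_pow]
      rw [if_neg (fun h => hvw (ZMod.val_injective n h.symm))]
      ring
    · intro h; exact absurd (Finset.mem_univ w) h
  have hRcoeff : ∀ w : ZMod n, R.coeff w.val = 1 := by
    intro w
    rw [hR, finset_sum_coeff]
    rw [Finset.sum_eq_single w.val]
    · simp
    · intro i _ hiw
      simp [coeff_X_pow, Ne.symm hiw]
    · intro h; exact absurd (Finset.mem_range.2 (ZMod.val_lt w)) h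
  constructor
  · intro htpc
    have hN1 := hTPC.1 htpc
    refine ⟨Q, ?_⟩
    rw [hQ]
    congr 1
    rw [hT, hR]
    have : ∀ v : ZMod n, (Polynomial.C (N v : ℤ)) * (X : ℤ[X]) ^ v.val = X ^ v.val := by
      intro v; rw [hN1 v]; simp
    rw [Finset.sum_congr rfl fun v _ => this v]
    exact sum_zmod_val (fun i => (X : ℤ[X]) ^ i)
  · rintro ⟨q, hq⟩
    -- (X^n - 1) * (q - Q) = T - R
    have heq : (X ^ n - 1 : ℤ[X]) * (Q - q) = R - T := by
      have := hq.symm.trans hQ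
      linear_combination -this
    -- degree bound
    have hdegT : T.degree < (n : ℕ) := by
      rw [hT]
      apply lt_of_le_of_lt (degree_sum_le _ _)
      rw [Finset.sup_lt_iff (by exact_mod_cast WithBot.bot_lt_coe n)]
      intro v _
      refine lt_of_le_of_lt (degree_C_mul_X_pow_le _ _) ?_
      exact_mod_cast ZMod.val_lt v
    have hdegR : R.degree < (n : ℕ) := by
      rw [hR]
      apply lt_of_le_of_lt (degree_sum_le _ _)
      rw [Finset.sup_lt_iff (by exact_mod_cast WithBot.bot_lt_coe n)]
      intro i hi
      refine lt_of_le_of_lt (degree_X_pow_le i) ?_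
      exact_mod_cast Finset.mem_range.1 hi
    have hdegXn : ((X : ℤ[X]) ^ n - 1).degree = (n : ℕ) := by
      rw [show (1 : ℤ[X]) = Polynomial.C 1 from (map_one Polynomial.C).symm]
      exact degree_X_pow_sub_C hn 1
    have hRT : R - T = 0 := by
      apply Polynomial.eq_zero_of_dvd_of_degree_lt ⟨Q - q, heq.symm⟩
      rw [hdegXn]
      exact lt_of_le_of_lt (degree_sub_le _ _) (max_lt hdegR hdegT)
    have hTR : T = R := (sub_eq_zero.1 hRT).symm
    apply hTPC.2
    intro v
    have := congrArg (fun p => p.coeff v.val) hTR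
    rw [hTcoeff, hRcoeff] at this
    exact_mod_cast this
end

section
/- Let Cay(Z_n, S) be a connected circulant graph of order n ≥ 4 and degree k = |S|. If k divides n and s ≢ s′ (mod k) for all distinct s, s′ ∈ S, then Cay(Z_n, S) admits a total perfect code; indeed the set C = {k·i : 0 ≤ i < n/k} ⊆ Z_n is a total perfect code in Cay(Z_n, S). -/
open Polynomial

/-- **Lemma 2.5.** If `Cay(Z_n, S)` is a connected circulant graph of order `n ≥ 4` and degree
`k = |S|`, `k ∣ n`, and the elements of `S` are pairwise distinct modulo `k`, then
`C = {k·i : 0 ≤ i < n/k}` is a total perfect code in `Cay(Z_n, S)`. -/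
theorem circulant_totalPerfectCode_of_pairwise_distinct_mod
    (n : ℕ) (hn : 4 ≤ n) (S : Finset (ZMod n))
    (h0S : (0 : ZMod n) ∉ S) (hSneg : ∀ s ∈ S, -s ∈ S)
    (hconn : (circulantGraph n S).Connected)
    (k : ℕ) (hk : S.card = k) (hdvd : k ∣ n)
    (hdist : ∀ s ∈ S, ∀ s' ∈ S, s ≠ s' → ¬ (s.val ≡ s'.val [MOD k])) :
    IsTotalPerfectCode (circulantGraph n S)
      {c : ZMod n | ∃ i < n / k, c = ((k * i : ℕ) : ZMod n)} := by
  haveI : NeZero n := ⟨by omega⟩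
  haveI : Fact (1 < n) := ⟨by omega⟩
  have hk0 : k ≠ 0 := by
    rintro rfl
    have hS : S = ∅ := Finset.card_eq_zero.mp hk
    have hbot : circulantGraph n S = ⊥ := by
      ext u v
      simp [circulantGraph, hS]
    rw [hbot] at hconn
    exact (zero_ne_one : (0 : ZMod n) ≠ 1)
      (SimpleGraph.reachable_bot.mp (hconn.preconnected 0 1))
  haveI : NeZero k := ⟨hk0⟩
  set φ : ZMod n →+* ZMod k := ZMod.castHom hdvd (ZMod k) with hphi
  have hφval : ∀ x : ZMod n, φ x = (x.val : ZMod k) := by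
    intro x
    conv_lhs => rw [← ZMod.natCast_rightInverse x]
    exact map_natCast φ x.val
  have hmem : ∀ x : ZMod n,
      (x ∈ {c : ZMod n | ∃ i < n / k, c = ((k * i : ℕ) : ZMod n)}) ↔ φ x = 0 := by
    intro x
    constructor
    · rintro ⟨i, hi, rfl⟩
      rw [map_natCast]
      push_cast
      simp
    · intro h
      rw [hφval] at h
      have hdvd' : k ∣ x.val := (ZMod.natCast_eq_zero_iff _ _).mp h
      refine ⟨x.val / k, ?_, ?_⟩
      · exact Nat.div_lt_div_of_lt_of_dvd hdvd (ZMod.val_lt x)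
      · rw [Nat.mul_div_cancel' hdvd', ZMod.natCast_rightInverse x]
  have hinj : Set.InjOn φ S := by
    intro s hs s' hs' hEq
    by_contra hne
    exact hdist s hs s' hs' hne
      ((ZMod.natCast_eq_natCast_iff _ _ _).mp (by rwa [hφval, hφval] at hEq))
  have hsurj : ∀ t : ZMod k, ∃ s ∈ S, φ s = t := by
    have himg : S.image φ = Finset.univ := by
      apply Finset.eq_univ_of_card
      rw [Finset.card_image_of_injOn hinj, hk, ZMod.card]
    intro t
    have ht : t ∈ S.image φ := by rw [himg]; exact Finset.mem_univ t
    simpa using ht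
  have hadj : ∀ v c : ZMod n, (circulantGraph n S).Adj v c ↔ c - v ∈ S := by
    intro v c
    constructor
    · rintro ⟨-, hs | hs⟩
      · exact hs
      · simpa using hSneg _ hs
    · intro hs
      refine ⟨fun hvc => ?_, Or.inl hs⟩
      rw [hvc] at hs
      simp at hs
      exact h0S hs
  intro v
  obtain ⟨s₀, hs₀S, hs₀⟩ := hsurj (-(φ v))
  refine ⟨v + s₀, ⟨?_, ?_⟩, ?_⟩
  · rw [hmem, map_add, hs₀]
    ring
  · rw [hadj]
    simpa using hs₀S
  · rintro c' ⟨hc'C, hc'A⟩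
    rw [hadj] at hc'A
    rw [hmem] at hc'C
    have : φ (c' - v) = φ s₀ := by
      rw [map_sub, hc'C, hs₀]
      ring
    have := hinj hc'A hs₀S this
    linear_combination (norm := abel) this
end

section
/- A cubic connected circulant graph of order n ≥ 4 admits a perfect code if and only if n ≡ 4 (mod 8). That is, for n ≥ 4 and S ⊆ Z_n with 0 ∉ S, S = −S, |S| = 3, and S generating Z_n, the circulant graph Cay(Z_n, S) has a perfect code if and only if n ≡ 4 (mod 8). -/
open Polynomial

section Aux

variable {n : ℕ} [NeZero n] {S : Finset (ZMod n)} {a m : ZMod n}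

lemma adj_iff (hS : ∀ s, s ∈ S ↔ s = a ∨ s = -a ∨ s = m) (h0 : (0 : ZMod n) ∉ S)
    (hm : -m = m) (v c : ZMod n) :
    (circulantGraph n S).Adj v c ↔ (c = v + a ∨ c = v - a ∨ c = v + m) := by
  have haS : a ∈ S := (hS a).2 (Or.inl rfl)
  have haS' : -a ∈ S := (hS (-a)).2 (Or.inr (Or.inl rfl))
  have hmS : m ∈ S := (hS m).2 (Or.inr (Or.inr rfl))
  have ha0 : a ≠ 0 := fun h => h0 (h ▸ haS)
  have ha0' : -a ≠ 0 := fun h => h0 (h ▸ haS')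
  have hm0 : m ≠ 0 := fun h => h0 (h ▸ hmS)
  constructor
  · rintro ⟨hne, h | h⟩
    · rcases (hS _).1 h with h' | h' | h'
      · exact Or.inl (by linear_combination (norm := ring_nf) h')
      · exact Or.inr (Or.inl (by linear_combination (norm := ring_nf) h'))
      · exact Or.inr (Or.inr (by linear_combination (norm := ring_nf) h'))
    · rcases (hS _).1 h with h' | h' | h'
      · exact Or.inr (Or.inl (by linear_combination (norm := ring_nf) -h'))
      · exact Or.inl (by linear_combination (norm := ring_nf) -h')
      · exact Or.inr (Or.inr (by linear_combination (norm := ring_nf) hm - h'))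
  · rintro (rfl | rfl | rfl)
    · exact ⟨fun h => ha0 (by linear_combination (norm := ring_nf) -h), Or.inl (by
        simpa using haS)⟩
    · exact ⟨fun h => ha0' (by linear_combination (norm := ring_nf) -h), Or.inl (by
        simpa using haS')⟩
    · exact ⟨fun h => hm0 (by linear_combination (norm := ring_nf) -h), Or.inl (by
        simpa using hmS)⟩

lemma code_iff (hS : ∀ s, s ∈ S ↔ s = a ∨ s = -a ∨ s = m) (h0 : (0 : ZMod n) ∉ S)
    (hm : -m = m) (haa : a ≠ -a) (ham : a ≠ m) (ham' : -a ≠ m)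
    (C : Set (ZMod n)) [DecidablePred (· ∈ C)] :
    IsPerfectCode (circulantGraph n S) C ↔
      ∀ v : ZMod n, (if v ∈ C then 1 else 0) + (if v + a ∈ C then 1 else 0)
        + (if v - a ∈ C then 1 else 0) + (if v + m ∈ C then 1 else 0) = 1 := by
  have haS : a ∈ S := (hS a).2 (Or.inl rfl)
  have hmS : m ∈ S := (hS m).2 (Or.inr (Or.inr rfl))
  have ha0 : a ≠ 0 := fun h => h0 (h ▸ haS)
  have hm0 : m ≠ 0 := fun h => h0 (h ▸ hmS)
  have adj := adj_iff hS h0 hm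
  -- distinctness of v, v+a, v-a, v+m
  have d1 : ∀ v : ZMod n, v + a ≠ v := fun v h => ha0 (by linear_combination (norm := ring_nf) h)
  have d2 : ∀ v : ZMod n, v - a ≠ v := fun v h => ha0 (by linear_combination (norm := ring_nf) -h)
  have d3 : ∀ v : ZMod n, v + m ≠ v := fun v h => hm0 (by linear_combination (norm := ring_nf) h)
  have d4 : ∀ v : ZMod n, v + a ≠ v - a := fun v h => haa (by linear_combination (norm := ring_nf) h)
  have d5 : ∀ v : ZMod n, v + a ≠ v + m := fun v h => ham (by linear_combination (norm := ring_nf) h)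
  have d6 : ∀ v : ZMod n, v - a ≠ v + m := fun v h => ham' (by linear_combination (norm := ring_nf) h)
  constructor
  · rintro ⟨hind, hdom⟩ v
    by_cases hv : v ∈ C
    · have h1 : v + a ∉ C := fun h => hind v hv _ h ((adj v _).2 (Or.inl rfl))
      have h2 : v - a ∉ C := fun h => hind v hv _ h ((adj v _).2 (Or.inr (Or.inl rfl)))
      have h3 : v + m ∉ C := fun h => hind v hv _ h ((adj v _).2 (Or.inr (Or.inr rfl)))
      simp [hv, h1, h2, h3]
    · obtain ⟨c, ⟨hcC, hcadj⟩, huniq⟩ := hdom v hv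
      rcases (adj v c).1 hcadj with rfl | rfl | rfl
      · have h2 : v - a ∉ C := fun h =>
          d4 v (huniq _ ⟨h, (adj v _).2 (Or.inr (Or.inl rfl))⟩).symm
        have h3 : v + m ∉ C := fun h =>
          d5 v (huniq _ ⟨h, (adj v _).2 (Or.inr (Or.inr rfl))⟩).symm
        simp [hv, hcC, h2, h3]
      · have h1 : v + a ∉ C := fun h =>
          d4 v (huniq _ ⟨h, (adj v _).2 (Or.inl rfl)⟩)
        have h3 : v + m ∉ C := fun h =>
          d6 v (huniq _ ⟨h, (adj v _).2 (Or.inr (Or.inr rfl))⟩).symm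
        simp [hv, hcC, h1, h3]
      · have h1 : v + a ∉ C := fun h =>
          d5 v (huniq _ ⟨h, (adj v _).2 (Or.inl rfl)⟩)
        have h2 : v - a ∉ C := fun h =>
          d6 v (huniq _ ⟨h, (adj v _).2 (Or.inr (Or.inl rfl))⟩)
        simp [hv, hcC, h1, h2]
  · intro hsum
    constructor
    · intro u hu w hw hadj
      have h := hsum u
      rcases (adj u w).1 hadj with rfl | rfl | rfl
      · rw [if_pos hu, if_pos hw] at h; omega
      · rw [if_pos hu, if_pos hw] at h
        split_ifs at h <;> omega
      · rw [if_pos hu, if_pos hw] at h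
        split_ifs at h <;> omega
    · intro v hv
      have h := hsum v
      rw [if_neg hv] at h
      by_cases h1 : v + a ∈ C
      · refine ⟨v + a, ⟨h1, (adj v _).2 (Or.inl rfl)⟩, ?_⟩
        rintro y ⟨hyC, hyadj⟩
        rcases (adj v y).1 hyadj with rfl | rfl | rfl
        · rfl
        · rw [if_pos h1, if_pos hyC] at h; omega
        · rw [if_pos h1, if_pos hyC] at h; split_ifs at h <;> omega
      · by_cases h2 : v - a ∈ C
        · refine ⟨v - a, ⟨h2, (adj v _).2 (Or.inr (Or.inl rfl))⟩, ?_⟩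
          rintro y ⟨hyC, hyadj⟩
          rcases (adj v y).1 hyadj with rfl | rfl | rfl
          · exact absurd hyC h1
          · rfl
          · rw [if_pos h2, if_pos hyC] at h; split_ifs at h <;> omega
        · by_cases h3 : v + m ∈ C
          · refine ⟨v + m, ⟨h3, (adj v _).2 (Or.inr (Or.inr rfl))⟩, ?_⟩
            rintro y ⟨hyC, hyadj⟩
            rcases (adj v y).1 hyadj with rfl | rfl | rfl
            · exact absurd hyC h1
            · exact absurd hyC h2
            · rfl
          · rw [if_neg h1, if_neg h2, if_neg h3] at h; omega

end Aux

lemma key_decide : ∀ u t : ZMod 4, (u = 1 ∨ u = 3) →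
    (if t = 0 then (1:ℕ) else 0) + (if t + u = 0 then 1 else 0)
      + (if t - u = 0 then 1 else 0) + (if t + 2 = 0 then 1 else 0) = 1 := by decide

/-- **Theorem 3.1.** A cubic connected circulant graph of order `n ≥ 4` admits a perfect code
iff `n ≡ 4 (mod 8)`. -/
theorem cubic_circulant_perfectCode_iff
    (n : ℕ) (hn : 4 ≤ n) (S : Finset (ZMod n))
    (h0S : (0 : ZMod n) ∉ S) (hSneg : ∀ s ∈ S, -s ∈ S) (hcard : S.card = 3)
    (hgen : AddSubgroup.closure (S : Set (ZMod n)) = ⊤) :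
    (∃ C : Set (ZMod n), IsPerfectCode (circulantGraph n S) C) ↔ n % 8 = 4 := by
  haveI : NeZero n := ⟨by omega⟩
  -- Step 1: find the involution element m
  obtain ⟨x, y, z, hxy, hxz, hyz, hSxyz⟩ := Finset.card_eq_three.mp hcard
  have hmex : ∃ m ∈ S, -m = m := by
    have hx : -x ∈ S := hSneg x (by rw [hSxyz]; simp)
    rw [hSxyz, Finset.mem_insert, Finset.mem_insert, Finset.mem_singleton] at hx
    rcases hx with h | h | h
    · exact ⟨x, by rw [hSxyz]; simp, h⟩
    · -- -x = y
      have hz : -z ∈ S := hSneg z (by rw [hSxyz]; simp)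
      rw [hSxyz, Finset.mem_insert, Finset.mem_insert, Finset.mem_singleton] at hz
      rcases hz with h' | h' | h'
      · exact absurd (by rw [← neg_neg z, h', h]) hyz.symm
      · exact absurd (by rw [← neg_neg z, h', ← h, neg_neg]) hxz.symm
      · exact ⟨z, by rw [hSxyz]; simp, h'⟩
    · -- -x = z
      have hy : -y ∈ S := hSneg y (by rw [hSxyz]; simp)
      rw [hSxyz, Finset.mem_insert, Finset.mem_insert, Finset.mem_singleton] at hy
      rcases hy with h' | h' | h'
      · exact absurd (by rw [← neg_neg y, h', h]) hyz
      · exact ⟨y, by rw [hSxyz]; simp, h'⟩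
      · exact absurd (by rw [← neg_neg y, h', ← h, neg_neg]) hxy.symm
  obtain ⟨m, hmS, hmm⟩ := hmex
  have hm0 : m ≠ 0 := fun h => h0S (h ▸ hmS)
  have hm2 : m + m = 0 := by linear_combination (norm := ring_nf) -hmm
  have hkey2 : ∀ w : ZMod n, w ≠ 0 → -w = w → w.val = n / 2 ∧ n % 2 = 0 := by
    intro w hw0 hww
    have h1 : (-w).val = n - w.val := by rw [ZMod.neg_val, if_neg hw0]
    rw [hww] at h1
    have h2 : w.val < n := ZMod.val_lt w
    have h3 : w.val ≠ 0 := fun h => hw0 ((ZMod.val_eq_zero w).mp h)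
    omega
  obtain ⟨hmval, hn2⟩ := hkey2 m hm0 hmm
  -- Step 2: S = {a, -a, m}
  have hTcard : (S.erase m).card = 2 := by rw [Finset.card_erase_of_mem hmS, hcard]
  obtain ⟨a, b, hab, hT⟩ := Finset.card_eq_two.mp hTcard
  have haT : a ∈ S.erase m := by rw [hT]; simp
  have haS : a ∈ S := Finset.mem_of_mem_erase haT
  have ham : a ≠ m := Finset.ne_of_mem_erase haT
  have ha0 : a ≠ 0 := fun h => h0S (h ▸ haS)
  have haa : a ≠ -a := by
    intro h
    have := hkey2 a ha0 h.symm
    exact ham (ZMod.val_injective n (by omega))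
  have hnaT : -a ∈ S.erase m := by
    refine Finset.mem_erase.mpr ⟨?_, hSneg a haS⟩
    intro h
    exact ham (by rw [← hmm, ← h, neg_neg])
  have ham' : -a ≠ m := Finset.ne_of_mem_erase hnaT
  have hbeq : b = -a := by
    rw [hT, Finset.mem_insert, Finset.mem_singleton] at hnaT
    rcases hnaT with h | h
    · exact absurd h.symm haa
    · exact h.symm
  subst hbeq
  have hSmem : ∀ s, s ∈ S ↔ s = a ∨ s = -a ∨ s = m := by
    intro s
    rw [← Finset.insert_erase hmS, hT]
    simp only [Finset.mem_insert, Finset.mem_singleton]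
    tauto
  -- parity : if m.val is even then a.val is odd (using connectivity)
  have hodd : m.val % 2 = 0 → a.val % 2 = 1 := by
    intro hmval2
    by_contra hc
    have h2n : (2:ℕ) ∣ n := by omega
    set φ := (ZMod.castHom h2n (ZMod 2)).toAddMonoidHom with hφ
    have hca : φ a = 0 := by
      rw [hφ]
      simp only [RingHom.toAddMonoidHom_eq_coe, AddMonoidHom.coe_coe]
      rw [ZMod.castHom_apply, ← ZMod.natCast_val, ZMod.natCast_eq_zero_iff]
      omega
    have hcm : φ m = 0 := by
      rw [hφ]
      simp only [RingHom.toAddMonoidHom_eq_coe, AddMonoidHom.coe_coe]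
      rw [ZMod.castHom_apply, ← ZMod.natCast_val, ZMod.natCast_eq_zero_iff]
      omega
    have hker : AddSubgroup.closure (S : Set (ZMod n)) ≤ φ.ker := by
      rw [AddSubgroup.closure_le]
      intro s hs
      rw [SetLike.mem_coe, AddMonoidHom.mem_ker]
      rcases (hSmem s).1 hs with rfl | rfl | rfl
      · exact hca
      · rw [map_neg, hca, neg_zero]
      · exact hcm
    rw [hgen, top_le_iff] at hker
    have h1 : φ 1 = 0 := AddMonoidHom.mem_ker.mp (hker ▸ AddSubgroup.mem_top 1)
    rw [hφ] at h1
    simp only [RingHom.toAddMonoidHom_eq_coe, AddMonoidHom.coe_coe, map_one] at h1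
    exact one_ne_zero h1
  constructor
  · -- perfect code → n ≡ 4 (mod 8)
    rintro ⟨C, hC⟩
    haveI := Classical.decPred (· ∈ C)
    rw [code_iff hSmem h0S hmm haa ham ham' C] at hC
    set f : ZMod n → ℕ := fun v => if v ∈ C then 1 else 0 with hf
    have hsum : ∀ v, f v + f (v + a) + f (v - a) + f (v + m) = 1 := hC
    have hf01 : ∀ v, f v ≤ 1 := fun v => by rw [hf]; dsimp only; split <;> omega
    have hA : 4 * ∑ v : ZMod n, f v = n := by
      have e1 : ∑ v : ZMod n, f (v + a) = ∑ v : ZMod n, f v :=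
        Equiv.sum_comp (Equiv.addRight a) f
      have e2 : ∑ v : ZMod n, f (v - a) = ∑ v : ZMod n, f v :=
        Equiv.sum_comp (Equiv.subRight a) f
      have e3 : ∑ v : ZMod n, f (v + m) = ∑ v : ZMod n, f v :=
        Equiv.sum_comp (Equiv.addRight m) f
      have e4 : ∑ v : ZMod n, (f v + f (v + a) + f (v - a) + f (v + m)) = ∑ _v : ZMod n, (1:ℕ) :=
        Finset.sum_congr rfl fun v _ => hsum v
      rw [Finset.sum_add_distrib, Finset.sum_add_distrib, Finset.sum_add_distrib,
        e1, e2, e3] at e4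
      simp only [Finset.sum_const, Finset.card_univ, ZMod.card, smul_eq_mul, mul_one] at e4
      omega
    by_contra h8
    have h8n : n % 8 = 0 := by
      have h4n : (4:ℕ) ∣ n := Dvd.intro _ hA
      omega
    have haodd : a.val % 2 = 1 := hodd (by omega)
    set g : ZMod n → ℕ := fun v => f v + f (v + m) with hg
    have hgsum : ∀ v, 2 * g v + g (v + a) + g (v - a) = 2 := by
      intro v
      have h1 := hsum v
      have h2 := hsum (v + m)
      have e1 : v + m + a = v + a + m := by ring
      have e2 : v + m - a = v - a + m := by ring
      have e3 : v + m + m = v := by rw [add_assoc, hm2, add_zero]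
      rw [e1, e2, e3] at h2
      simp only [hg]
      omega
    have hg1 : ∀ v, g v ≤ 1 := fun v => by have := hgsum v; omega
    have halt : ∀ v, g (v + a) + g v = 1 := by
      intro v
      have h1 := hgsum v
      have h2 := hg1 v
      have h3 := hg1 (v + a)
      have h4 := hg1 (v - a)
      omega
    have hp : ∀ v, f (v + a + a + a + a) = f v := by
      intro v
      by_cases hgv : g v = 1
      · have h1 : g (v + a) = 0 := by have := halt v; omega
        have h3 : g (v + a + a + a) = 0 := by
          have := halt (v + a); have := halt (v + a + a); omega
        have c1 := hsum (v + a)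
        have c2 := hsum (v + a + a + a)
        rw [add_sub_cancel_right] at c1 c2
        simp only [hg] at h1 h3
        omega
      · have hgv0 : g v = 0 := by have := hg1 v; omega
        have h4 : g (v + a + a + a + a) = 0 := by
          have := halt v; have := halt (v + a); have := halt (v + a + a)
          have := halt (v + a + a + a); omega
        simp only [hg] at hgv0 h4
        omega
    have hp4 : ∀ v, f (v + a * 4) = f v := by
      intro v
      have e : v + a * 4 = v + a + a + a + a := by ring
      rw [e]
      exact hp v
    have hit : ∀ (k : ℕ) (v : ZMod n), f (v + a * 4 * (k : ZMod n)) = f v := by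
      intro k
      induction k with
      | zero => intro v; simp
      | succ k ih =>
        intro v
        have e : v + a * 4 * ((k+1 : ℕ) : ZMod n) = (v + a * 4) + a * 4 * (k : ZMod n) := by
          push_cast; ring
        rw [e, ih, hp4]
    have hmcast : m = ((n / 2 : ℕ) : ZMod n) := by
      rw [← hmval]
      exact (ZMod.natCast_rightInverse m).symm
    have ham2 : a * m = m := by
      obtain ⟨j, hj⟩ : ∃ j, a.val = 2 * j + 1 := ⟨a.val / 2, by omega⟩
      have e : a = ((a.val : ℕ) : ZMod n) := (ZMod.natCast_rightInverse a).symm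
      rw [e, hj]
      push_cast
      linear_combination (norm := ring_nf) (j : ZMod n) * hm2
    have hm48 : m = a * 4 * ((n / 8 : ℕ) : ZMod n) := by
      have e2 : (n / 2 : ℕ) = 4 * (n / 8) := by omega
      rw [← ham2]
      nth_rewrite 1 [hmcast]
      rw [e2]
      push_cast
      ring
    obtain ⟨v0, hv0⟩ : ∃ v, g v = 1 := by
      by_cases h : g 0 = 1
      · exact ⟨0, h⟩
      · exact ⟨0 + a, by have := halt 0; omega⟩
    have hfin : f (v0 + m) = f v0 := by rw [hm48]; exact hit _ _
    simp only [hg] at hv0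
    have := hf01 v0
    omega
  · -- n ≡ 4 (mod 8) → perfect code
    intro h8
    have h4n : (4:ℕ) ∣ n := by omega
    have haodd : a.val % 2 = 1 := hodd (by omega)
    set ψ := ZMod.castHom h4n (ZMod 4) with hψ
    have h40 : (4 : ZMod 4) = 0 := by decide
    have hψm : ψ m = 2 := by
      rw [hψ, ZMod.castHom_apply, ← ZMod.natCast_val]
      have hmod : m.val % 4 = 2 := by omega
      rw [← Nat.mod_add_div m.val 4, hmod]
      push_cast
      rw [h40]
      ring
    have hψa : ψ a = 1 ∨ ψ a = 3 := by
      have h4 : a.val % 4 = 1 ∨ a.val % 4 = 3 := by omega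
      rw [hψ, ZMod.castHom_apply, ← ZMod.natCast_val, ← Nat.mod_add_div a.val 4]
      rcases h4 with h | h <;> rw [h] <;> [left; right] <;> push_cast <;> rw [h40] <;> ring
    refine ⟨{w | ψ w = 0}, ?_⟩
    rw [@code_iff n _ S a m hSmem h0S hmm haa ham ham' {w | ψ w = 0}
      (fun w => ZMod.decidableEq 4 (ψ w) 0)]
    intro v
    simp only [Set.mem_setOf_eq, map_add, map_sub, hψm]
    exact key_decide (ψ a) (ψ v) hψa
end
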